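/- arXiv:2603.15232 — 8 statements merged into one kernel-verified Lean document; each statement's English description precedes it below -/
import Mathlib

section
/- Let 𝒜 ⊆ F be a sub-σ-algebra and let T : Ω → Δ(𝒴) be an 𝒜-measurable random variable. Then E[ℓ(T,Y)] = E[d_ℓ(T, Q_𝒜)] + E[E_ℓ(Q_𝒜)]. -/
open MeasureTheory Finset

noncomputable section

/-- The probability simplex on a finite label set `𝒴`, identified with the set of
functions `p : 𝒴 → ℝ` with nonnegative coordinates summing to one. -/
def simplex (𝒴 : Type*) [Fintype 𝒴] : Set (𝒴 → ℝ) :=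
  {p | (∀ y, 0 ≤ p y) ∧ ∑ y, p y = 1}

/-- Conditional risk `L(p,q) := ∑_y q(y) ℓ(p,y)`. -/
def condRisk {𝒴 : Type*} [Fintype 𝒴] (ℓ : (𝒴 → ℝ) → 𝒴 → ℝ) (p q : 𝒴 → ℝ) : ℝ :=
  ∑ y, q y * ℓ p y

/-- Generalized entropy `E_ℓ(q) := L(q,q)`. -/
def gEntropy {𝒴 : Type*} [Fintype 𝒴] (ℓ : (𝒴 → ℝ) → 𝒴 → ℝ) (q : 𝒴 → ℝ) : ℝ :=
  condRisk ℓ q q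

/-- Divergence (regret) `d_ℓ(p,q) := L(p,q) - E_ℓ(q)`. -/
def divg {𝒴 : Type*} [Fintype 𝒴] (ℓ : (𝒴 → ℝ) → 𝒴 → ℝ) (p q : 𝒴 → ℝ) : ℝ :=
  condRisk ℓ p q - gEntropy ℓ q

/-- one-level decomposition. For a sub-σ-algebra `𝒜 ⊆ F` and an
`𝒜`-measurable `Δ(𝒴)`-valued random variable `T`,
`E[ℓ(T,Y)] = E[d_ℓ(T, Q_𝒜)] + E[E_ℓ(Q_𝒜)]`, where `Q_𝒜` is (a version of) the conditional
law of `Y` given `𝒜`. -/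
theorem one_level_decomposition
    {Ω 𝒴 : Type*} [Fintype 𝒴] [Nonempty 𝒴]
    [MeasurableSpace 𝒴] [MeasurableSingletonClass 𝒴]
    {mΩ : MeasurableSpace Ω} {P : Measure Ω} [IsProbabilityMeasure P]
    (Y : Ω → 𝒴) (hY : Measurable Y)
    (ℓ : (𝒴 → ℝ) → 𝒴 → ℝ)
    (hℓmeas : ∀ y, Measurable fun p : 𝒴 → ℝ => ℓ p y)
    (hℓbdd : ∃ M : ℝ, ∀ p ∈ simplex 𝒴, ∀ y, |ℓ p y| ≤ M)
    {𝒜 : MeasurableSpace Ω} (h𝒜 : 𝒜 ≤ mΩ)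
    (T : Ω → 𝒴 → ℝ) (hTΔ : ∀ ω, T ω ∈ simplex 𝒴)
    (hTmeas : ∀ y, Measurable[𝒜] fun ω => T ω y)
    (Q : Ω → 𝒴 → ℝ) (hQΔ : ∀ ω, Q ω ∈ simplex 𝒴)
    (hQmeas : ∀ y, Measurable[𝒜] fun ω => Q ω y)
    (hQver : ∀ y, (fun ω => Q ω y)
      =ᵐ[P] P[Set.indicator {ω | Y ω = y} (fun _ => (1 : ℝ)) | 𝒜]) :
    ∫ ω, ℓ (T ω) (Y ω) ∂P
      = ∫ ω, divg ℓ (T ω) (Q ω) ∂P + ∫ ω, gEntropy ℓ (Q ω) ∂P := by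
  classical
  obtain ⟨M, hM⟩ := hℓbdd
  -- M is nonnegative since the simplex is nonempty
  have hunif : (fun _ : 𝒴 => (Fintype.card 𝒴 : ℝ)⁻¹) ∈ simplex 𝒴 := by
    constructor
    · intro y; positivity
    · rw [Finset.sum_const, Finset.card_univ, nsmul_eq_mul, mul_inv_cancel₀]
      exact Nat.cast_ne_zero.mpr Fintype.card_ne_zero
  have hM0 : 0 ≤ M := le_trans (abs_nonneg _) (hM _ hunif (Classical.arbitrary 𝒴))
  -- basic integrability helper
  have hint : ∀ (f : Ω → ℝ), Measurable[mΩ] f → (∀ ω, |f ω| ≤ M) → Integrable f P := by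
    intro f hf hb
    exact (integrable_const M).mono' hf.aestronglyMeasurable (ae_of_all _ fun ω => hb ω)
  -- measurability of ω ↦ ℓ (T ω) y and ℓ (Q ω) y
  have hTm : Measurable[𝒜] T := measurable_pi_lambda _ hTmeas
  have hQm : Measurable[𝒜] Q := measurable_pi_lambda _ hQmeas
  have hfT : ∀ y, Measurable[𝒜] fun ω => ℓ (T ω) y := fun y => (hℓmeas y).comp hTm
  have hfQ : ∀ y, Measurable[𝒜] fun ω => ℓ (Q ω) y := fun y => (hℓmeas y).comp hQm
  have hfTb : ∀ y ω, |ℓ (T ω) y| ≤ M := fun y ω => hM _ (hTΔ ω) y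
  have hfQb : ∀ y ω, |ℓ (Q ω) y| ≤ M := fun y ω => hM _ (hQΔ ω) y
  -- bound for the conditional risk against Q
  have hrisk_bound : ∀ (g : Ω → 𝒴 → ℝ), (∀ y ω, |ℓ (g ω) y| ≤ M) →
      ∀ ω, |condRisk ℓ (g ω) (Q ω)| ≤ M := by
    intro g hg ω
    have h1 : |condRisk ℓ (g ω) (Q ω)| ≤ ∑ y, Q ω y * M := by
      refine le_trans (Finset.abs_sum_le_sum_abs _ _) (Finset.sum_le_sum fun y _ => ?_)
      rw [abs_mul, abs_of_nonneg ((hQΔ ω).1 y)]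
      exact mul_le_mul_of_nonneg_left (hg y ω) ((hQΔ ω).1 y)
    calc |condRisk ℓ (g ω) (Q ω)| ≤ ∑ y, Q ω y * M := h1
      _ = (∑ y, Q ω y) * M := by rw [Finset.sum_mul]
      _ = M := by rw [(hQΔ ω).2, one_mul]
  -- integrability facts
  have hintT : Integrable (fun ω => condRisk ℓ (T ω) (Q ω)) P := by
    refine hint _ ?_ (hrisk_bound T hfTb)
    exact Finset.measurable_sum _ fun y _ =>
      ((hQmeas y).mono h𝒜 le_rfl).mul ((hfT y).mono h𝒜 le_rfl)
  have hintQ : Integrable (fun ω => gEntropy ℓ (Q ω)) P := by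
    refine hint _ ?_ (hrisk_bound Q hfQb)
    exact Finset.measurable_sum _ fun y _ =>
      ((hQmeas y).mono h𝒜 le_rfl).mul ((hfQ y).mono h𝒜 le_rfl)
  -- RHS = ∫ condRisk ℓ T Q
  have hRHS : ∫ ω, divg ℓ (T ω) (Q ω) ∂P + ∫ ω, gEntropy ℓ (Q ω) ∂P
      = ∫ ω, condRisk ℓ (T ω) (Q ω) ∂P := by
    have : ∫ ω, divg ℓ (T ω) (Q ω) ∂P
        = ∫ ω, condRisk ℓ (T ω) (Q ω) ∂P - ∫ ω, gEntropy ℓ (Q ω) ∂P := by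
      simp_rw [divg]
      exact integral_sub hintT hintQ
    rw [this]; ring
  rw [hRHS]
  -- key per-label identity
  have key : ∀ y : 𝒴, ∫ ω, Q ω y * ℓ (T ω) y ∂P
      = ∫ ω, Set.indicator {ω | Y ω = y} (fun _ => (1 : ℝ)) ω * ℓ (T ω) y ∂P := by
    intro y
    set f : Ω → ℝ := fun ω => ℓ (T ω) y with hf
    set g : Ω → ℝ := Set.indicator {ω | Y ω = y} (fun _ => (1 : ℝ)) with hg
    have hgb : ∀ ω, |g ω| ≤ 1 := by
      intro ω; simp only [hg, Set.indicator_apply]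
      split <;> simp
    have hgmeas : Measurable[mΩ] g :=
      Measurable.indicator measurable_const (hY (MeasurableSet.singleton y))
    have hgint : Integrable g P :=
      (integrable_const (1 : ℝ)).mono' hgmeas.aestronglyMeasurable (ae_of_all _ hgb)
    have hfgint : Integrable (f * g) P := by
      refine hint _ (((hfT y).mono h𝒜 le_rfl).mul hgmeas) fun ω => ?_
      calc |f ω * g ω| = |f ω| * |g ω| := abs_mul _ _
        _ ≤ M * 1 := mul_le_mul (hfTb y ω) (hgb ω) (abs_nonneg _) hM0
        _ = M := mul_one M
    have hpull : P[f * g|𝒜] =ᵐ[P] f * P[g|𝒜] :=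
      condExp_mul_of_stronglyMeasurable_left (hfT y).stronglyMeasurable hfgint hgint
    have h1 : ∫ ω, f ω * g ω ∂P = ∫ ω, f ω * (P[g|𝒜]) ω ∂P := by
      calc ∫ ω, f ω * g ω ∂P = ∫ ω, (f * g) ω ∂P := rfl
        _ = ∫ ω, (P[f * g|𝒜]) ω ∂P := (integral_condExp h𝒜).symm
        _ = ∫ ω, (f * P[g|𝒜]) ω ∂P := integral_congr_ae hpull
        _ = ∫ ω, f ω * (P[g|𝒜]) ω ∂P := rfl
    have h2 : ∫ ω, f ω * (P[g|𝒜]) ω ∂P = ∫ ω, f ω * Q ω y ∂P := by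
      refine integral_congr_ae ?_
      filter_upwards [hQver y] with ω hω
      rw [hω]
    calc ∫ ω, Q ω y * ℓ (T ω) y ∂P = ∫ ω, f ω * Q ω y ∂P := by
          simp_rw [hf, mul_comm]
      _ = ∫ ω, f ω * (P[g|𝒜]) ω ∂P := h2.symm
      _ = ∫ ω, f ω * g ω ∂P := h1.symm
      _ = ∫ ω, g ω * f ω ∂P := by simp_rw [mul_comm]
  -- expand both sides as sums over y
  have hLHS : ∫ ω, ℓ (T ω) (Y ω) ∂P
      = ∑ y, ∫ ω, Set.indicator {ω | Y ω = y} (fun _ => (1 : ℝ)) ω * ℓ (T ω) y ∂P := by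
    rw [← integral_finset_sum]
    · refine integral_congr_ae (ae_of_all _ fun ω => ?_)
      simp [Set.indicator_apply, eq_comm]
    · intro y _
      refine hint _ ?_ fun ω => ?_
      · exact (Measurable.indicator measurable_const
          (hY (MeasurableSet.singleton y))).mul ((hfT y).mono h𝒜 le_rfl)
      · calc |Set.indicator {ω | Y ω = y} (fun _ => (1 : ℝ)) ω * ℓ (T ω) y|
            = |Set.indicator {ω | Y ω = y} (fun _ => (1 : ℝ)) ω| * |ℓ (T ω) y| := abs_mul _ _
          _ ≤ 1 * M := by
              refine mul_le_mul ?_ (hfTb y ω) (abs_nonneg _) zero_le_one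
              simp only [Set.indicator_apply]; split <;> simp
          _ = M := one_mul M
  have hRHS2 : ∫ ω, condRisk ℓ (T ω) (Q ω) ∂P = ∑ y, ∫ ω, Q ω y * ℓ (T ω) y ∂P := by
    simp_rw [condRisk]
    refine integral_finset_sum _ fun y _ => ?_
    refine hint _ (((hQmeas y).mono h𝒜 le_rfl).mul ((hfT y).mono h𝒜 le_rfl)) fun ω => ?_
    calc |Q ω y * ℓ (T ω) y| = |Q ω y| * |ℓ (T ω) y| := abs_mul _ _
      _ ≤ 1 * M := by
          refine mul_le_mul ?_ (hfTb y ω) (abs_nonneg _) zero_le_one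
          rw [abs_of_nonneg ((hQΔ ω).1 y)]
          calc Q ω y ≤ ∑ y', Q ω y' := Finset.single_le_sum (fun y' _ => (hQΔ ω).1 y') (mem_univ y)
            _ = 1 := (hQΔ ω).2
      _ = M := one_mul M
  rw [hLHS, hRHS2]
  exact Finset.sum_congr rfl fun y _ => (key y).symm
end
end

section
/- Let 𝒜 ⊆ ℬ ⊆ F be nested sub-σ-algebras and let T : Ω → Δ(𝒴) be an 𝒜-measurable random variable. Then E[ℓ(T,Y)] = E[d_ℓ(T, Q_𝒜)] + E[d_ℓ(Q_𝒜, Q_ℬ)] + E[E_ℓ(Q_ℬ)]. -/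
open MeasureTheory Finset

noncomputable section

/-!
Since `ℓ(p, Y) = L(p, δ_Y)` and `L(p, ·)` is linear, for an `m`-measurable predictor `f`
the pull-out property of conditional expectation gives `E[ℓ(f, Y)] = E[L(f, Q_m)]`.
Applying this to `T` and `Q_𝒜` (both `𝒜`-, hence `ℬ`-measurable) yields
`E[ℓ(T,Y)] = E[L(T,Q_𝒜)]` and `E[L(Q_𝒜,Q_𝒜)] = E[ℓ(Q_𝒜,Y)] = E[L(Q_𝒜,Q_ℬ)]`;
the decomposition is then a telescoping sum.
-/

theorem integral_condExp_mul_eq_integral_mul_of_bound {Ω : Type*} {m mΩ : MeasurableSpace Ω}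
    {μ : Measure Ω} [IsFiniteMeasure μ] (hm : m ≤ mΩ) {f g : Ω → ℝ}
    (hf : StronglyMeasurable[m] f) (hg : Integrable g μ) (c : ℝ) (hf_bound : ∀ ω, ‖f ω‖ ≤ c) :
    ∫ ω, μ[g | m] ω * f ω ∂μ = ∫ ω, g ω * f ω ∂μ := by
  simp_rw [mul_comm _ (f _)]
  calc ∫ ω, f ω * μ[g | m] ω ∂μ = ∫ ω, μ[f * g | m] ω ∂μ :=
        integral_congr_ae
          (condExp_stronglyMeasurable_mul_of_bound hm hf hg c (.of_forall hf_bound)).symm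
    _ = ∫ ω, f ω * g ω ∂μ := integral_condExp hm

section Risk

variable {Ω 𝒴 : Type*} {ℓ : (𝒴 → ℝ) → 𝒴 → ℝ}

theorem measurable_loss_comp {m : MeasurableSpace Ω}
    (hℓ : ∀ y, Measurable fun p : 𝒴 → ℝ => ℓ p y) {f : Ω → 𝒴 → ℝ}
    (hf : ∀ y, Measurable[m] fun ω => f ω y) (y : 𝒴) :
    Measurable[m] fun ω => ℓ (f ω) y :=
  (hℓ y).comp (measurable_pi_lambda _ hf)

variable [Fintype 𝒴] {M : ℝ}

theorem abs_condRisk_le (hM : ∀ p ∈ simplex 𝒴, ∀ y, |ℓ p y| ≤ M) {p q : 𝒴 → ℝ}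
    (hp : p ∈ simplex 𝒴) (hq : q ∈ simplex 𝒴) : |condRisk ℓ p q| ≤ M :=
  calc |∑ y, q y * ℓ p y| ≤ ∑ y, |q y * ℓ p y| := abs_sum_le_sum_abs _ _
    _ = ∑ y, q y * |ℓ p y| := by simp_rw [abs_mul, abs_of_nonneg (hq.1 _)]
    _ ≤ ∑ y, q y * M := sum_le_sum fun y _ => mul_le_mul_of_nonneg_left (hM p hp y) (hq.1 y)
    _ = M := by rw [← sum_mul, hq.2, one_mul]

theorem condRisk_indicator_eq (Y : Ω → 𝒴) (p : 𝒴 → ℝ) (ω : Ω) :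
    condRisk ℓ p (fun y => {ω | Y ω = y}.indicator (fun _ => (1 : ℝ)) ω) = ℓ p (Y ω) := by
  classical
  simp [condRisk, Set.indicator_apply]

variable {mΩ : MeasurableSpace Ω} {P : Measure Ω}

theorem integrable_condRisk [IsFiniteMeasure P] (hℓ : ∀ y, Measurable fun p : 𝒴 → ℝ => ℓ p y)
    (hM : ∀ p ∈ simplex 𝒴, ∀ y, |ℓ p y| ≤ M)
    {f g : Ω → 𝒴 → ℝ} (hfΔ : ∀ ω, f ω ∈ simplex 𝒴) (hgΔ : ∀ ω, g ω ∈ simplex 𝒴)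
    (hf : ∀ y, Measurable fun ω => f ω y) (hg : ∀ y, Measurable fun ω => g ω y) :
    Integrable (fun ω => condRisk ℓ (f ω) (g ω)) P := by
  refine (integrable_const M).mono' ?_ (.of_forall fun ω => abs_condRisk_le hM (hfΔ ω) (hgΔ ω))
  exact (Finset.measurable_sum _ fun y _ =>
    (hg y).mul (measurable_loss_comp hℓ hf y)).aestronglyMeasurable

theorem integral_divg [IsFiniteMeasure P] (hℓ : ∀ y, Measurable fun p : 𝒴 → ℝ => ℓ p y)
    (hM : ∀ p ∈ simplex 𝒴, ∀ y, |ℓ p y| ≤ M)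
    {f g : Ω → 𝒴 → ℝ} (hfΔ : ∀ ω, f ω ∈ simplex 𝒴) (hgΔ : ∀ ω, g ω ∈ simplex 𝒴)
    (hf : ∀ y, Measurable fun ω => f ω y) (hg : ∀ y, Measurable fun ω => g ω y) :
    ∫ ω, divg ℓ (f ω) (g ω) ∂P
      = ∫ ω, condRisk ℓ (f ω) (g ω) ∂P - ∫ ω, gEntropy ℓ (g ω) ∂P :=
  integral_sub (integrable_condRisk hℓ hM hfΔ hgΔ hf hg)
    (integrable_condRisk hℓ hM hgΔ hgΔ hg hg)

theorem integral_condRisk_condExp [IsFiniteMeasure P] {m : MeasurableSpace Ω} (hm : m ≤ mΩ)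
    (hℓ : ∀ y, Measurable fun p : 𝒴 → ℝ => ℓ p y)
    {f : Ω → 𝒴 → ℝ} (hf : ∀ y, Measurable[m] fun ω => f ω y) (hf_bound : ∀ ω y, |ℓ (f ω) y| ≤ M)
    {q Q : Ω → 𝒴 → ℝ} (hq : ∀ y, Integrable (fun ω => q ω y) P)
    (hQ : ∀ y, (fun ω => Q ω y) =ᵐ[P] P[fun ω => q ω y | m]) :
    ∫ ω, condRisk ℓ (f ω) (Q ω) ∂P = ∫ ω, condRisk ℓ (f ω) (q ω) ∂P := by
  have hloss y := measurable_loss_comp hℓ hf y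
  have hQ_int y : Integrable (fun ω => Q ω y * ℓ (f ω) y) P :=
    (integrable_condExp.congr (hQ y).symm).mul_bdd
      ((hloss y).mono hm le_rfl).aestronglyMeasurable (.of_forall fun ω => hf_bound ω y)
  have hq_int y : Integrable (fun ω => q ω y * ℓ (f ω) y) P :=
    (hq y).mul_bdd ((hloss y).mono hm le_rfl).aestronglyMeasurable
      (.of_forall fun ω => hf_bound ω y)
  simp only [condRisk]
  rw [integral_finsetSum _ fun y _ => hQ_int y, integral_finsetSum _ fun y _ => hq_int y]
  refine sum_congr rfl fun y _ => ?_
  rw [← integral_condExp_mul_eq_integral_mul_of_bound hm (hloss y).stronglyMeasurable (hq y) M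
    (fun ω => hf_bound ω y)]
  exact integral_congr_ae ((hQ y).mul .rfl)

theorem integral_loss_eq_integral_condRisk [MeasurableSpace 𝒴] [MeasurableSingletonClass 𝒴]
    [IsFiniteMeasure P] {Y : Ω → 𝒴} (hY : Measurable Y)
    (hℓ : ∀ y, Measurable fun p : 𝒴 → ℝ => ℓ p y) (hM : ∀ p ∈ simplex 𝒴, ∀ y, |ℓ p y| ≤ M)
    {m : MeasurableSpace Ω} (hm : m ≤ mΩ) {f : Ω → 𝒴 → ℝ} (hfΔ : ∀ ω, f ω ∈ simplex 𝒴)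
    (hf : ∀ y, Measurable[m] fun ω => f ω y) {Q : Ω → 𝒴 → ℝ}
    (hQ : ∀ y, (fun ω => Q ω y) =ᵐ[P] P[{ω | Y ω = y}.indicator (fun _ => (1 : ℝ)) | m]) :
    ∫ ω, ℓ (f ω) (Y ω) ∂P = ∫ ω, condRisk ℓ (f ω) (Q ω) ∂P := by
  rw [integral_condRisk_condExp hm hℓ hf (fun ω => hM _ (hfΔ ω))
    (q := fun ω y => {ω | Y ω = y}.indicator (fun _ => 1) ω)
    (fun y => (integrable_const 1).indicator (hY (measurableSet_singleton y))) hQ]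
  simp only [condRisk_indicator_eq]

end Risk

theorem chain_decomposition_general
    {Ω 𝒴 : Type*} [Fintype 𝒴]
    [MeasurableSpace 𝒴] [MeasurableSingletonClass 𝒴]
    {mΩ : MeasurableSpace Ω} {P : Measure Ω} [IsProbabilityMeasure P]
    (Y : Ω → 𝒴) (hY : Measurable Y)
    (ℓ : (𝒴 → ℝ) → 𝒴 → ℝ)
    (hℓmeas : ∀ y, Measurable fun p : 𝒴 → ℝ => ℓ p y)
    (hℓbdd : ∃ M : ℝ, ∀ p ∈ simplex 𝒴, ∀ y, |ℓ p y| ≤ M)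
    {𝒜 ℬ : MeasurableSpace Ω} (h𝒜ℬ : 𝒜 ≤ ℬ) (hℬ : ℬ ≤ mΩ)
    (T : Ω → 𝒴 → ℝ) (hTΔ : ∀ ω, T ω ∈ simplex 𝒴)
    (hTmeas : ∀ y, Measurable[𝒜] fun ω => T ω y)
    (Q𝒜 : Ω → 𝒴 → ℝ) (hQ𝒜Δ : ∀ ω, Q𝒜 ω ∈ simplex 𝒴)
    (hQ𝒜meas : ∀ y, Measurable[𝒜] fun ω => Q𝒜 ω y)
    (hQ𝒜ver : ∀ y, (fun ω => Q𝒜 ω y)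
      =ᵐ[P] P[Set.indicator {ω | Y ω = y} (fun _ => (1 : ℝ)) | 𝒜])
    (Qℬ : Ω → 𝒴 → ℝ) (hQℬΔ : ∀ ω, Qℬ ω ∈ simplex 𝒴)
    (hQℬmeas : ∀ y, Measurable[ℬ] fun ω => Qℬ ω y)
    (hQℬver : ∀ y, (fun ω => Qℬ ω y)
      =ᵐ[P] P[Set.indicator {ω | Y ω = y} (fun _ => (1 : ℝ)) | ℬ]) :
    ∫ ω, ℓ (T ω) (Y ω) ∂P
      = ∫ ω, divg ℓ (T ω) (Q𝒜 ω) ∂P + ∫ ω, divg ℓ (Q𝒜 ω) (Qℬ ω) ∂P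
        + ∫ ω, gEntropy ℓ (Qℬ ω) ∂P := by
  obtain ⟨M, hM⟩ := hℓbdd
  have h𝒜 : 𝒜 ≤ mΩ := h𝒜ℬ.trans hℬ
  have hT y := (hTmeas y).mono h𝒜 le_rfl
  have hQ𝒜 y := (hQ𝒜meas y).mono h𝒜 le_rfl
  have hQℬ y := (hQℬmeas y).mono hℬ le_rfl
  have hT_risk := integral_loss_eq_integral_condRisk hY hℓmeas hM h𝒜 hTΔ hTmeas hQ𝒜ver
  have hQ𝒜_entropy :=
    integral_loss_eq_integral_condRisk hY hℓmeas hM h𝒜 hQ𝒜Δ hQ𝒜meas hQ𝒜ver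
  have hQ𝒜_risk := integral_loss_eq_integral_condRisk hY hℓmeas hM hℬ hQ𝒜Δ
    (fun y => (hQ𝒜meas y).mono h𝒜ℬ le_rfl) hQℬver
  rw [integral_divg hℓmeas hM hTΔ hQ𝒜Δ hT hQ𝒜, integral_divg hℓmeas hM hQ𝒜Δ hQℬΔ hQ𝒜 hQℬ,
    hT_risk, ← hQ𝒜_risk]
  simp only [gEntropy] at hQ𝒜_entropy ⊢
  rw [← hQ𝒜_entropy]
  ring

/-- chain decomposition for nested information levels. For nested
sub-σ-algebras `𝒜 ⊆ ℬ ⊆ F` and an `𝒜`-measurable `Δ(𝒴)`-valued `T`,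
`E[ℓ(T,Y)] = E[d_ℓ(T,Q_𝒜)] + E[d_ℓ(Q_𝒜,Q_ℬ)] + E[E_ℓ(Q_ℬ)]`. -/
theorem chain_decomposition
    {Ω 𝒴 : Type*} [Fintype 𝒴] [Nonempty 𝒴]
    [MeasurableSpace 𝒴] [MeasurableSingletonClass 𝒴]
    {mΩ : MeasurableSpace Ω} {P : Measure Ω} [IsProbabilityMeasure P]
    (Y : Ω → 𝒴) (hY : Measurable Y)
    (ℓ : (𝒴 → ℝ) → 𝒴 → ℝ)
    (hℓmeas : ∀ y, Measurable fun p : 𝒴 → ℝ => ℓ p y)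
    (hℓbdd : ∃ M : ℝ, ∀ p ∈ simplex 𝒴, ∀ y, |ℓ p y| ≤ M)
    {𝒜 ℬ : MeasurableSpace Ω} (h𝒜ℬ : 𝒜 ≤ ℬ) (hℬ : ℬ ≤ mΩ)
    (T : Ω → 𝒴 → ℝ) (hTΔ : ∀ ω, T ω ∈ simplex 𝒴)
    (hTmeas : ∀ y, Measurable[𝒜] fun ω => T ω y)
    (Q𝒜 : Ω → 𝒴 → ℝ) (hQ𝒜Δ : ∀ ω, Q𝒜 ω ∈ simplex 𝒴)
    (hQ𝒜meas : ∀ y, Measurable[𝒜] fun ω => Q𝒜 ω y)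
    (hQ𝒜ver : ∀ y, (fun ω => Q𝒜 ω y)
      =ᵐ[P] P[Set.indicator {ω | Y ω = y} (fun _ => (1 : ℝ)) | 𝒜])
    (Qℬ : Ω → 𝒴 → ℝ) (hQℬΔ : ∀ ω, Qℬ ω ∈ simplex 𝒴)
    (hQℬmeas : ∀ y, Measurable[ℬ] fun ω => Qℬ ω y)
    (hQℬver : ∀ y, (fun ω => Qℬ ω y)
      =ᵐ[P] P[Set.indicator {ω | Y ω = y} (fun _ => (1 : ℝ)) | ℬ]) :
    ∫ ω, ℓ (T ω) (Y ω) ∂P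
      = ∫ ω, divg ℓ (T ω) (Q𝒜 ω) ∂P + ∫ ω, divg ℓ (Q𝒜 ω) (Qℬ ω) ∂P
        + ∫ ω, gEntropy ℓ (Qℬ ω) ∂P :=
  chain_decomposition_general Y hY ℓ hℓmeas hℓbdd h𝒜ℬ hℬ T hTΔ hTmeas Q𝒜 hQ𝒜Δ hQ𝒜meas hQ𝒜ver Qℬ hQℬΔ
    hQℬmeas hQℬver
end
end

section
/- Let 𝒜 ⊆ ℬ ⊆ 𝒞 ⊆ F be nested sub-σ-algebras and let S : Ω → Δ(𝒴) be an 𝒜-measurable random variable. Writing C := Q_𝒜, Q := Q_ℬ, and Π := Q_𝒞, we have E[ℓ(S,Y)] = E[d_ℓ(S, C)] + E[d_ℓ(C, Q)] + E[d_ℓ(Q, Π)] + E[E_ℓ(Π)]. -/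
open MeasureTheory Finset

noncomputable section

section Aux

variable {Ω 𝒴 : Type*} [Fintype 𝒴] [MeasurableSpace 𝒴] [MeasurableSingletonClass 𝒴]
  {mΩ : MeasurableSpace Ω} {P : Measure Ω} [IsProbabilityMeasure P]

omit [MeasurableSpace 𝒴] [MeasurableSingletonClass 𝒴] in
lemma simplex_coord_abs_le_one {p : 𝒴 → ℝ} (hp : p ∈ simplex 𝒴) (y : 𝒴) : |p y| ≤ 1 := by
  obtain ⟨h0, h1⟩ := hp
  rw [abs_of_nonneg (h0 y)]
  calc p y ≤ ∑ z, p z := Finset.single_le_sum (fun z _ => h0 z) (Finset.mem_univ y)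
  _ = 1 := h1

omit [MeasurableSpace 𝒴] [MeasurableSingletonClass 𝒴] in
lemma integrable_of_bdd {g : Ω → ℝ} (hg : Measurable[mΩ] g) {Cb : ℝ} (hb : ∀ ω, |g ω| ≤ Cb) :
    Integrable g P :=
  (integrable_const Cb).mono' hg.aestronglyMeasurable (ae_of_all _ fun ω => by
    simpa [Real.norm_eq_abs] using hb ω)

omit [MeasurableSpace 𝒴] [MeasurableSingletonClass 𝒴] in
lemma integrable_condRisk_s4 (ℓ : (𝒴 → ℝ) → 𝒴 → ℝ)
    (hℓmeas : ∀ y, Measurable fun p : 𝒴 → ℝ => ℓ p y)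
    {M : ℝ} (hM : ∀ p ∈ simplex 𝒴, ∀ y, |ℓ p y| ≤ M)
    (X : Ω → 𝒴 → ℝ) (hXΔ : ∀ ω, X ω ∈ simplex 𝒴) (hX : ∀ y, Measurable[mΩ] fun ω => X ω y)
    (R : Ω → 𝒴 → ℝ) (hRΔ : ∀ ω, R ω ∈ simplex 𝒴) (hR : ∀ y, Measurable[mΩ] fun ω => R ω y) :
    Integrable (fun ω => condRisk ℓ (X ω) (R ω)) P := by
  have hXmeas : Measurable[mΩ] X := measurable_pi_lambda _ hX
  refine integrable_finset_sum _ fun y _ => ?_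
  refine integrable_of_bdd ((hR y).mul ((hℓmeas y).comp hXmeas)) (Cb := 1 * max M 0) fun ω => ?_
  rw [abs_mul]
  exact mul_le_mul (simplex_coord_abs_le_one (hRΔ ω) y)
    ((hM _ (hXΔ ω) y).trans (le_max_left _ _)) (abs_nonneg _) zero_le_one

/-- Key lemma: for `m`-measurable simplex-valued `X` and `R` a version of the conditional
law of `Y` given `m`, `E[ℓ(X,Y)] = E[L(X,R)]`. -/
lemma key_lemma (Y : Ω → 𝒴) (hY : Measurable[mΩ] Y)
    (ℓ : (𝒴 → ℝ) → 𝒴 → ℝ)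
    (hℓmeas : ∀ y, Measurable fun p : 𝒴 → ℝ => ℓ p y)
    {M : ℝ} (hM : ∀ p ∈ simplex 𝒴, ∀ y, |ℓ p y| ≤ M)
    {m : MeasurableSpace Ω} (hm : m ≤ mΩ)
    (X : Ω → 𝒴 → ℝ) (hXΔ : ∀ ω, X ω ∈ simplex 𝒴)
    (hX : ∀ y, Measurable[m] fun ω => X ω y)
    (R : Ω → 𝒴 → ℝ) (hRΔ : ∀ ω, R ω ∈ simplex 𝒴)
    (hR : ∀ y, Measurable[m] fun ω => R ω y)
    (hRver : ∀ y, (fun ω => R ω y)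
      =ᵐ[P] P[Set.indicator {ω | Y ω = y} (fun _ => (1 : ℝ)) | m]) :
    ∫ ω, ℓ (X ω) (Y ω) ∂P = ∫ ω, condRisk ℓ (X ω) (R ω) ∂P := by
  classical
  have hM' : ∀ p ∈ simplex 𝒴, ∀ y, |ℓ p y| ≤ max M 0 := fun p hp y =>
    (hM p hp y).trans (le_max_left _ _)
  have hXmeas : Measurable[m] X := measurable_pi_lambda _ hX
  have hfmeas : ∀ y, Measurable[m] fun ω => ℓ (X ω) y := fun y => (hℓmeas y).comp hXmeas
  have hfmeas' : ∀ y, Measurable[mΩ] fun ω => ℓ (X ω) y := fun y => (hfmeas y).mono hm le_rfl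
  have hfbd : ∀ y ω, |ℓ (X ω) y| ≤ max M 0 := fun y ω => hM' _ (hXΔ ω) y
  set ind : 𝒴 → Ω → ℝ := fun y => Set.indicator {ω | Y ω = y} (fun _ => (1 : ℝ)) with hind
  have hindmeas : ∀ y, Measurable[mΩ] (ind y) := fun y =>
    (measurable_const.indicator (hY (measurableSet_singleton y)))
  have hindbd : ∀ y ω, |ind y ω| ≤ 1 := by
    intro y ω
    by_cases h : ω ∈ {ω' | Y ω' = y} <;> simp [hind, Set.indicator_apply, h]
  have hprod_int : ∀ y, Integrable (fun ω => ind y ω * ℓ (X ω) y) P := fun y =>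
    integrable_of_bdd ((hindmeas y).mul (hfmeas' y)) (Cb := 1 * max M 0) fun ω => by
      rw [abs_mul]
      exact mul_le_mul (hindbd y ω) (hfbd y ω) (abs_nonneg _) zero_le_one
  have h1 : ∀ ω, ℓ (X ω) (Y ω) = ∑ y, ind y ω * ℓ (X ω) y := by
    intro ω
    simp only [hind, Set.indicator_apply, Set.mem_setOf_eq, ite_mul, one_mul, zero_mul]
    rw [Finset.sum_ite_eq Finset.univ (Y ω) (fun y => ℓ (X ω) y)]
    simp
  calc ∫ ω, ℓ (X ω) (Y ω) ∂P = ∫ ω, ∑ y, ind y ω * ℓ (X ω) y ∂P :=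
        integral_congr_ae (ae_of_all _ h1)
    _ = ∑ y, ∫ ω, ind y ω * ℓ (X ω) y ∂P := integral_finset_sum _ fun y _ => hprod_int y
    _ = ∑ y, ∫ ω, R ω y * ℓ (X ω) y ∂P := by
        refine Finset.sum_congr rfl fun y _ => ?_
        have hfSM : StronglyMeasurable[m] fun ω => ℓ (X ω) y := (hfmeas y).stronglyMeasurable
        have hindint : Integrable (ind y) P := integrable_of_bdd (hindmeas y) (hindbd y)
        have hmul : Integrable ((fun ω => ℓ (X ω) y) * ind y) P :=
          (hprod_int y).congr (ae_of_all _ fun ω => mul_comm _ _)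
        have hpull := condExp_mul_of_stronglyMeasurable_left (μ := P) hfSM hmul hindint
        calc ∫ ω, ind y ω * ℓ (X ω) y ∂P
            = ∫ ω, ((fun ω => ℓ (X ω) y) * ind y) ω ∂P :=
              integral_congr_ae (ae_of_all _ fun ω => mul_comm _ _)
          _ = ∫ ω, (P[(fun ω => ℓ (X ω) y) * ind y | m]) ω ∂P :=
              (integral_condExp hm).symm
          _ = ∫ ω, ℓ (X ω) y * (P[ind y | m]) ω ∂P := by
              refine integral_congr_ae ?_
              filter_upwards [hpull] with ω hω
              simpa using hω
          _ = ∫ ω, R ω y * ℓ (X ω) y ∂P := by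
              refine integral_congr_ae ?_
              filter_upwards [hRver y] with ω hω
              rw [hω, mul_comm]
    _ = ∫ ω, ∑ y, R ω y * ℓ (X ω) y ∂P := by
        rw [← integral_finset_sum]
        intro y _
        refine integrable_of_bdd (((hR y).mono hm le_rfl).mul (hfmeas' y))
          (Cb := 1 * max M 0) fun ω => ?_
        rw [abs_mul]
        exact mul_le_mul (simplex_coord_abs_le_one (hRΔ ω) y) (hfbd y ω)
          (abs_nonneg _) zero_le_one
    _ = ∫ ω, condRisk ℓ (X ω) (R ω) ∂P := rfl

end Aux

/-- four-term decomposition. For nested sub-σ-algebras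
`𝒜 ⊆ ℬ ⊆ 𝒞 ⊆ F` and an `𝒜`-measurable `Δ(𝒴)`-valued `S`, writing `C := Q_𝒜`,
`Q := Q_ℬ`, `Π := Q_𝒞`,
`E[ℓ(S,Y)] = E[d_ℓ(S,C)] + E[d_ℓ(C,Q)] + E[d_ℓ(Q,Π)] + E[E_ℓ(Π)]`. -/
theorem four_term_decomposition
    {Ω 𝒴 : Type*} [Fintype 𝒴] [Nonempty 𝒴]
    [MeasurableSpace 𝒴] [MeasurableSingletonClass 𝒴]
    {mΩ : MeasurableSpace Ω} {P : Measure Ω} [IsProbabilityMeasure P]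
    (Y : Ω → 𝒴) (hY : Measurable Y)
    (ℓ : (𝒴 → ℝ) → 𝒴 → ℝ)
    (hℓmeas : ∀ y, Measurable fun p : 𝒴 → ℝ => ℓ p y)
    (hℓbdd : ∃ M : ℝ, ∀ p ∈ simplex 𝒴, ∀ y, |ℓ p y| ≤ M)
    {𝒜 ℬ 𝒞 : MeasurableSpace Ω} (h𝒜ℬ : 𝒜 ≤ ℬ) (hℬ𝒞 : ℬ ≤ 𝒞) (h𝒞 : 𝒞 ≤ mΩ)
    (S : Ω → 𝒴 → ℝ) (hSΔ : ∀ ω, S ω ∈ simplex 𝒴)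
    (hSmeas : ∀ y, Measurable[𝒜] fun ω => S ω y)
    (C : Ω → 𝒴 → ℝ) (hCΔ : ∀ ω, C ω ∈ simplex 𝒴)
    (hCmeas : ∀ y, Measurable[𝒜] fun ω => C ω y)
    (hCver : ∀ y, (fun ω => C ω y)
      =ᵐ[P] P[Set.indicator {ω | Y ω = y} (fun _ => (1 : ℝ)) | 𝒜])
    (Q : Ω → 𝒴 → ℝ) (hQΔ : ∀ ω, Q ω ∈ simplex 𝒴)
    (hQmeas : ∀ y, Measurable[ℬ] fun ω => Q ω y)
    (hQver : ∀ y, (fun ω => Q ω y)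
      =ᵐ[P] P[Set.indicator {ω | Y ω = y} (fun _ => (1 : ℝ)) | ℬ])
    (Pi : Ω → 𝒴 → ℝ) (hPiΔ : ∀ ω, Pi ω ∈ simplex 𝒴)
    (hPimeas : ∀ y, Measurable[𝒞] fun ω => Pi ω y)
    (hPiver : ∀ y, (fun ω => Pi ω y)
      =ᵐ[P] P[Set.indicator {ω | Y ω = y} (fun _ => (1 : ℝ)) | 𝒞]) :
    ∫ ω, ℓ (S ω) (Y ω) ∂P
      = ∫ ω, divg ℓ (S ω) (C ω) ∂P + ∫ ω, divg ℓ (C ω) (Q ω) ∂P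
        + ∫ ω, divg ℓ (Q ω) (Pi ω) ∂P + ∫ ω, gEntropy ℓ (Pi ω) ∂P := by
  obtain ⟨M, hM⟩ := hℓbdd
  have hm𝒜 : 𝒜 ≤ mΩ := h𝒜ℬ.trans (hℬ𝒞.trans h𝒞)
  have hmℬ : ℬ ≤ mΩ := hℬ𝒞.trans h𝒞
  have hS' : ∀ y, Measurable[mΩ] fun ω => S ω y := fun y => (hSmeas y).mono hm𝒜 le_rfl
  have hC' : ∀ y, Measurable[mΩ] fun ω => C ω y := fun y => (hCmeas y).mono hm𝒜 le_rfl
  have hQ' : ∀ y, Measurable[mΩ] fun ω => Q ω y := fun y => (hQmeas y).mono hmℬ le_rfl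
  have hPi' : ∀ y, Measurable[mΩ] fun ω => Pi ω y := fun y => (hPimeas y).mono h𝒞 le_rfl
  have e1 := key_lemma Y hY ℓ hℓmeas hM hm𝒜 S hSΔ hSmeas C hCΔ hCmeas hCver
  have e2 := key_lemma Y hY ℓ hℓmeas hM hm𝒜 C hCΔ hCmeas C hCΔ hCmeas hCver
  have e3 := key_lemma Y hY ℓ hℓmeas hM hmℬ C hCΔ
    (fun y => (hCmeas y).mono h𝒜ℬ le_rfl) Q hQΔ hQmeas hQver
  have e4 := key_lemma Y hY ℓ hℓmeas hM hmℬ Q hQΔ hQmeas Q hQΔ hQmeas hQver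
  have e5 := key_lemma Y hY ℓ hℓmeas hM h𝒞 Q hQΔ
    (fun y => (hQmeas y).mono hℬ𝒞 le_rfl) Pi hPiΔ hPimeas hPiver
  have iSC := integrable_condRisk_s4 (P := P) ℓ hℓmeas hM S hSΔ hS' C hCΔ hC'
  have iCC := integrable_condRisk_s4 (P := P) ℓ hℓmeas hM C hCΔ hC' C hCΔ hC'
  have iCQ := integrable_condRisk_s4 (P := P) ℓ hℓmeas hM C hCΔ hC' Q hQΔ hQ'
  have iQQ := integrable_condRisk_s4 (P := P) ℓ hℓmeas hM Q hQΔ hQ' Q hQΔ hQ'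
  have iQPi := integrable_condRisk_s4 (P := P) ℓ hℓmeas hM Q hQΔ hQ' Pi hPiΔ hPi'
  have iPiPi := integrable_condRisk_s4 (P := P) ℓ hℓmeas hM Pi hPiΔ hPi' Pi hPiΔ hPi'
  have d1 : ∫ ω, divg ℓ (S ω) (C ω) ∂P
      = ∫ ω, condRisk ℓ (S ω) (C ω) ∂P - ∫ ω, condRisk ℓ (C ω) (C ω) ∂P := by
    simp only [divg, gEntropy]; exact integral_sub iSC iCC
  have d2 : ∫ ω, divg ℓ (C ω) (Q ω) ∂P
      = ∫ ω, condRisk ℓ (C ω) (Q ω) ∂P - ∫ ω, condRisk ℓ (Q ω) (Q ω) ∂P := by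
    simp only [divg, gEntropy]; exact integral_sub iCQ iQQ
  have d3 : ∫ ω, divg ℓ (Q ω) (Pi ω) ∂P
      = ∫ ω, condRisk ℓ (Q ω) (Pi ω) ∂P - ∫ ω, condRisk ℓ (Pi ω) (Pi ω) ∂P := by
    simp only [divg, gEntropy]; exact integral_sub iQPi iPiPi
  have dE : ∫ ω, gEntropy ℓ (Pi ω) ∂P = ∫ ω, condRisk ℓ (Pi ω) (Pi ω) ∂P := by
    simp only [gEntropy]
  rw [d1, d2, d3, dE, e1]
  linarith [e2.symm.trans e3, e4.symm.trans e5]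
end
end

section
/- Let 𝒜 ⊆ ℬ ⊆ F be nested sub-σ-algebras, let S : Ω → [0,1] be an 𝒜-measurable random variable, and set C := E[Y | 𝒜] and Q := E[Y | ℬ]. Then E[(S − Y)²] = E[(S − C)²] + E[(C − Q)²] + E[Q(1 − Q)]. -/
/-!
Write `S - Y = (S - C) + (C - Q) + (Q - Y)`. The residual `C - Y` of the conditional
expectation onto `𝒜` is orthogonal in `L²` to the `𝒜`-measurable `S - C`, and likewise `Q - Y`
is orthogonal to the `ℬ`-measurable `C - Q`; two applications of Pythagoras leave
`E[(Q - Y)²]`. Since `Y² = Y`, this equals `E[Y] - E[Q²] = E[Q] - E[Q²] = E[Q(1 - Q)]`.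
-/

open MeasureTheory

namespace MeasureTheory

variable {Ω : Type*} {m m₀ : MeasurableSpace Ω} {μ : Measure Ω} [IsFiniteMeasure μ]
  {f g : Ω → ℝ}

lemma integral_mul_condExp_sub_eq_zero (hm : m ≤ m₀) (hf : StronglyMeasurable[m] f)
    (hf₂ : MemLp f 2 μ) (hg : MemLp g 2 μ) :
    ∫ ω, f ω * (μ[g|m] ω - g ω) ∂μ = 0 := by
  have hfg : Integrable (f * g) μ := hf₂.integrable_mul hg
  have hfc : Integrable (f * μ[g|m]) μ := hf₂.integrable_mul (hg.condExp one_le_two)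
  calc ∫ ω, f ω * (μ[g|m] ω - g ω) ∂μ
      = ∫ ω, (f * μ[g|m]) ω ∂μ - ∫ ω, (f * g) ω ∂μ := by
        simp_rw [mul_sub]; exact integral_sub hfc hfg
    _ = ∫ ω, (μ[f * g|m]) ω ∂μ - ∫ ω, (f * g) ω ∂μ := by
        rw [integral_congr_ae
          (condExp_mul_of_stronglyMeasurable_left hf hfg (hg.integrable one_le_two)).symm]
    _ = 0 := by rw [integral_condExp hm, sub_self]

lemma integral_add_condExp_sub_sq (hm : m ≤ m₀) (hf : StronglyMeasurable[m] f)
    (hf₂ : MemLp f 2 μ) (hg : MemLp g 2 μ) :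
    ∫ ω, (f ω + (μ[g|m] ω - g ω)) ^ 2 ∂μ
      = ∫ ω, f ω ^ 2 ∂μ + ∫ ω, (μ[g|m] ω - g ω) ^ 2 ∂μ := by
  have hr : MemLp (μ[g|m] - g) 2 μ := (hg.condExp one_le_two).sub hg
  have hr_sq : Integrable (fun ω => (μ[g|m] ω - g ω) ^ 2) μ := hr.integrable_sq
  have hcross : Integrable (fun ω => 2 * (f ω * (μ[g|m] ω - g ω))) μ :=
    (hf₂.integrable_mul hr).const_mul 2
  have hsum : Integrable (fun ω => f ω ^ 2 + (μ[g|m] ω - g ω) ^ 2) μ :=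
    hf₂.integrable_sq.add hr_sq
  calc ∫ ω, (f ω + (μ[g|m] ω - g ω)) ^ 2 ∂μ
      = ∫ ω, (f ω ^ 2 + (μ[g|m] ω - g ω) ^ 2) + 2 * (f ω * (μ[g|m] ω - g ω)) ∂μ := by
        congr 1; ext ω; ring
    _ = ∫ ω, f ω ^ 2 ∂μ + ∫ ω, (μ[g|m] ω - g ω) ^ 2 ∂μ := by
        rw [integral_add hsum hcross,
          integral_add hf₂.integrable_sq hr_sq, integral_const_mul,
          integral_mul_condExp_sub_eq_zero hm hf hf₂ hg, mul_zero, add_zero]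

lemma integral_sq_eq_integral_sq_condExp_add (hm : m ≤ m₀) (hg : MemLp g 2 μ) :
    ∫ ω, g ω ^ 2 ∂μ
      = ∫ ω, (μ[g|m]) ω ^ 2 ∂μ + ∫ ω, (μ[g|m] ω - g ω) ^ 2 ∂μ := by
  have h := integral_add_condExp_sub_sq hm stronglyMeasurable_condExp.neg
    (hg.condExp one_le_two).neg hg
  have hcancel : ∀ ω, -(μ[g|m]) ω + ((μ[g|m]) ω - g ω) = -g ω := fun ω => by ring
  simpa only [Pi.neg_apply, hcancel, neg_sq] using h

lemma integral_condExp_sub_sq_of_sq_eq_self (hm : m ≤ m₀) (hg : MemLp g 2 μ)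
    (hg_sq : ∀ ω, g ω ^ 2 = g ω) :
    ∫ ω, (μ[g|m] ω - g ω) ^ 2 ∂μ = ∫ ω, (μ[g|m]) ω * (1 - (μ[g|m]) ω) ∂μ := by
  have hc := hg.condExp (m := m) one_le_two
  have h := integral_sq_eq_integral_sq_condExp_add hm hg
  simp_rw [hg_sq] at h
  simp_rw [mul_one_sub, ← sq]
  rw [integral_sub (hc.integrable one_le_two) hc.integrable_sq, integral_condExp hm, h]
  ring

end MeasureTheory

/-- variance-type decomposition for the Brier score. For nested
sub-σ-algebras `𝒜 ⊆ ℬ ⊆ F`, an `𝒜`-measurable score `S : Ω → [0,1]`, and a binary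
outcome `Y`, with `C := E[Y|𝒜]` and `Q := E[Y|ℬ]`,
`E[(S−Y)²] = E[(S−C)²] + E[(C−Q)²] + E[Q(1−Q)]`. -/
theorem brier_variance_decomposition
    {Ω : Type*} {mΩ : MeasurableSpace Ω} {P : Measure Ω} [IsProbabilityMeasure P]
    (Y : Ω → ℝ) (hY : Measurable Y) (hY01 : ∀ ω, Y ω = 0 ∨ Y ω = 1)
    {𝒜 ℬ : MeasurableSpace Ω} (h𝒜ℬ : 𝒜 ≤ ℬ) (hℬ : ℬ ≤ mΩ)
    (S : Ω → ℝ) (hSmeas : Measurable[𝒜] S) (hS01 : ∀ ω, S ω ∈ Set.Icc (0 : ℝ) 1) :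
    ∫ ω, (S ω - Y ω) ^ 2 ∂P
      = ∫ ω, (S ω - (P[Y|𝒜]) ω) ^ 2 ∂P
        + ∫ ω, ((P[Y|𝒜]) ω - (P[Y|ℬ]) ω) ^ 2 ∂P
        + ∫ ω, (P[Y|ℬ]) ω * (1 - (P[Y|ℬ]) ω) ∂P := by
  have hY₂ : MemLp Y 2 P := .of_bound hY.aestronglyMeasurable 1 <| ae_of_all _ fun ω => by
    rcases hY01 ω with h | h <;> simp [h]
  have h𝒜 : 𝒜 ≤ mΩ := h𝒜ℬ.trans hℬ
  have hS₂ : MemLp S 2 P := .of_bound (hSmeas.mono h𝒜 le_rfl).aestronglyMeasurable 1 <|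
    ae_of_all _ fun ω => abs_le.2 ⟨by linarith [(hS01 ω).1], (hS01 ω).2⟩
  have hC₂ : MemLp (P[Y|𝒜]) 2 P := hY₂.condExp one_le_two
  have hQ₂ : MemLp (P[Y|ℬ]) 2 P := hY₂.condExp one_le_two
  have hSC := integral_add_condExp_sub_sq h𝒜
    (hSmeas.stronglyMeasurable.sub stronglyMeasurable_condExp) (hS₂.sub hC₂) hY₂
  have hCQ := integral_add_condExp_sub_sq hℬ
    ((stronglyMeasurable_condExp.mono h𝒜ℬ).sub stronglyMeasurable_condExp)
    (hC₂.sub hQ₂) hY₂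
  simp only [Pi.sub_apply, sub_add_sub_cancel] at hSC hCQ
  rw [hSC, hCQ, integral_condExp_sub_sq_of_sq_eq_self hℬ hY₂ fun ω => by
    rcases hY01 ω with h | h <;> simp [h], add_assoc]
end

section
/- Let ℓ be a proper loss, let S : Ω → Δ(𝒴) be a measurable random variable, and set C := Q_{σ(S)}. Then (i) E[ℓ(S,Y)] = E[d_ℓ(S, C)] + E[E_ℓ(C)]; (ii) E[d_ℓ(S, C)] ≥ 0; (iii) if ℓ is strictly proper, then E[d_ℓ(S, C)] = 0 if and only if S = C almost surely; and (iv) if S = C almost surely (perfect calibration), then E[S(y)] = P(Y = y) for every y ∈ 𝒴 (global balance). -/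
/-!
Writing `ℓ(S, Y) = ∑_y ℓ(S, y) 1_{Y = y}` and pulling the bounded `σ(S)`-measurable factor
`ℓ(S, y)` out of `E[1_{Y = y} | σ(S)] = C(y)` gives `E[ℓ(S, Y)] = E[L(S, C)]`, which splits as
`E[d_ℓ(S, C)] + E[E_ℓ(C)]`. Nonnegativity and the equality case follow from `d_ℓ ≥ 0` pointwise,
and global balance from the tower property `E[C(y)] = P(Y = y)`.
-/

open MeasureTheory Finset

noncomputable section

theorem divg_self {𝒴 : Type*} [Fintype 𝒴] (ℓ : (𝒴 → ℝ) → 𝒴 → ℝ) (p : 𝒴 → ℝ) :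
    divg ℓ p p = 0 :=
  sub_self _

section

variable {Ω 𝒴 : Type*} {m mΩ : MeasurableSpace Ω} {P : Measure Ω}

/-- `C` is a version of the conditional law `Q_m` of `Y`. -/
def IsCondLaw (m : MeasurableSpace Ω) (P : Measure[mΩ] Ω) (Y : Ω → 𝒴) (C : Ω → 𝒴 → ℝ) : Prop :=
  ∀ y, (fun ω => C ω y) =ᵐ[P] P[{ω | Y ω = y}.indicator (fun _ => (1 : ℝ)) | m]

theorem integral_mul_condExp_of_bound [IsFiniteMeasure P] (hm : m ≤ mΩ) {f g : Ω → ℝ}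
    (hf : AEStronglyMeasurable[m] f P) (hg : Integrable g P) (c : ℝ)
    (hf_bound : ∀ᵐ ω ∂P, ‖f ω‖ ≤ c) :
    ∫ ω, f ω * g ω ∂P = ∫ ω, f ω * (P[g | m]) ω ∂P := by
  rw [← integral_condExp hm]
  exact integral_congr_ae (condExp_stronglyMeasurable_mul_of_bound₀ hm hf hg c hf_bound)

theorem sum_mul_indicator_preimage_singleton [Fintype 𝒴] (f : 𝒴 → ℝ) (Y : Ω → 𝒴) (ω : Ω) :
    ∑ y, f y * {ω | Y ω = y}.indicator (fun _ => (1 : ℝ)) ω = f (Y ω) := by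
  rw [sum_eq_single (Y ω)]
  · simp
  · intro y _ hy
    simp [Set.indicator_of_notMem (show ω ∉ {ω | Y ω = y} from Ne.symm hy)]
  · simp

namespace IsCondLaw

variable {Y : Ω → 𝒴} {C : Ω → 𝒴 → ℝ}

theorem integrable (hC : IsCondLaw m P Y C) (y : 𝒴) : Integrable (fun ω => C ω y) P :=
  integrable_condExp.congr (hC y).symm

theorem aemeasurable [Countable 𝒴] (hm : m ≤ mΩ) (hC : IsCondLaw m P Y C) : AEMeasurable C P :=
  aemeasurable_pi_lambda C fun y =>
    (stronglyMeasurable_condExp.mono hm).aemeasurable.congr (hC y).symm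

theorem integral_eq_measureReal [MeasurableSpace 𝒴] [MeasurableSingletonClass 𝒴]
    [IsFiniteMeasure P] (hm : m ≤ mΩ) (hY : Measurable Y) (hC : IsCondLaw m P Y C) (y : 𝒴) :
    ∫ ω, C ω y ∂P = P.real {ω | Y ω = y} := by
  rw [integral_congr_ae (hC y), integral_condExp hm]
  exact integral_indicator_one (hY (measurableSet_singleton y))

theorem integral_apply_eq_integral_sum_mul [Fintype 𝒴] [MeasurableSpace 𝒴]
    [MeasurableSingletonClass 𝒴] [IsFiniteMeasure P] (hm : m ≤ mΩ) (hY : Measurable Y)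
    (hC : IsCondLaw m P Y C) {g : Ω → 𝒴 → ℝ}
    (hg : ∀ y, AEStronglyMeasurable[m] (fun ω => g ω y) P) (c : ℝ)
    (hg_bound : ∀ y, ∀ᵐ ω ∂P, ‖g ω y‖ ≤ c) :
    ∫ ω, g ω (Y ω) ∂P = ∫ ω, ∑ y, C ω y * g ω y ∂P := by
  have hind : ∀ y, Integrable ({ω | Y ω = y}.indicator fun _ => (1 : ℝ)) P := fun y =>
    (integrable_const 1).indicator (hY (measurableSet_singleton y))
  calc ∫ ω, g ω (Y ω) ∂P
      = ∫ ω, ∑ y, g ω y * {ω | Y ω = y}.indicator (fun _ => (1 : ℝ)) ω ∂P := by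
        simp only [sum_mul_indicator_preimage_singleton]
    _ = ∑ y, ∫ ω, g ω y * {ω | Y ω = y}.indicator (fun _ => (1 : ℝ)) ω ∂P :=
        integral_finsetSum _ fun y _ => (hind y).bdd_mul ((hg y).mono hm) (hg_bound y)
    _ = ∑ y, ∫ ω, C ω y * g ω y ∂P := by
        refine sum_congr rfl fun y _ => ?_
        rw [integral_mul_condExp_of_bound hm (hg y) (hind y) c (hg_bound y)]
        exact integral_congr_ae ((hC y).mono fun ω h => by dsimp only at h ⊢; rw [h, mul_comm])
    _ = ∫ ω, ∑ y, C ω y * g ω y ∂P :=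
        (integral_finsetSum _ fun y _ => (hC.integrable y).mul_bdd ((hg y).mono hm)
          (hg_bound y)).symm

end IsCondLaw

theorem integrable_condRisk_s9 [Fintype 𝒴] {ℓ : (𝒴 → ℝ) → 𝒴 → ℝ} {p q : Ω → 𝒴 → ℝ}
    (hℓp : ∀ y, AEStronglyMeasurable (fun ω => ℓ (p ω) y) P) (c : ℝ)
    (hℓp_bound : ∀ y, ∀ᵐ ω ∂P, ‖ℓ (p ω) y‖ ≤ c) (hq : ∀ y, Integrable (fun ω => q ω y) P) :
    Integrable (fun ω => condRisk ℓ (p ω) (q ω)) P :=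
  integrable_finsetSum _ fun y _ => (hq y).mul_bdd (hℓp y) (hℓp_bound y)

theorem integral_divg_eq_zero_iff [Fintype 𝒴] {ℓ : (𝒴 → ℝ) → 𝒴 → ℝ}
    (hproper : ∀ p ∈ simplex 𝒴, ∀ q ∈ simplex 𝒴, 0 ≤ divg ℓ p q)
    (hstrict : ∀ p ∈ simplex 𝒴, ∀ q ∈ simplex 𝒴, divg ℓ p q = 0 → p = q)
    {p q : Ω → 𝒴 → ℝ} (hp : ∀ ω, p ω ∈ simplex 𝒴) (hq : ∀ ω, q ω ∈ simplex 𝒴)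
    (hint : Integrable (fun ω => divg ℓ (p ω) (q ω)) P) :
    ∫ ω, divg ℓ (p ω) (q ω) ∂P = 0 ↔ p =ᵐ[P] q := by
  rw [integral_eq_zero_iff_of_nonneg (fun ω => hproper _ (hp ω) _ (hq ω)) hint]
  constructor
  · exact fun h => h.mono fun ω hω => hstrict _ (hp ω) _ (hq ω) hω
  · exact fun h => h.mono fun ω hω => by simp only [hω, divg_self, Pi.zero_apply]

end

theorem calibration_error_as_proper_regret_general
    {Ω 𝒴 : Type*} [Fintype 𝒴]
    [MeasurableSpace 𝒴] [MeasurableSingletonClass 𝒴]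
    {mΩ : MeasurableSpace Ω} {P : Measure Ω} [IsProbabilityMeasure P]
    (Y : Ω → 𝒴) (hY : Measurable Y)
    (ℓ : (𝒴 → ℝ) → 𝒴 → ℝ)
    (hℓmeas : ∀ y, Measurable fun p : 𝒴 → ℝ => ℓ p y)
    (hℓbdd : ∃ M : ℝ, ∀ p ∈ simplex 𝒴, ∀ y, |ℓ p y| ≤ M)
    (hproper : ∀ p ∈ simplex 𝒴, ∀ q ∈ simplex 𝒴, 0 ≤ divg ℓ p q)
    (S : Ω → 𝒴 → ℝ) (hSΔ : ∀ ω, S ω ∈ simplex 𝒴) (hSmeas : Measurable S)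
    (C : Ω → 𝒴 → ℝ) (hCΔ : ∀ ω, C ω ∈ simplex 𝒴)
    (hCver : ∀ y, (fun ω => C ω y)
      =ᵐ[P] P[Set.indicator {ω | Y ω = y} (fun _ => (1 : ℝ))
              | MeasurableSpace.comap S inferInstance]) :
    (∫ ω, ℓ (S ω) (Y ω) ∂P
        = ∫ ω, divg ℓ (S ω) (C ω) ∂P + ∫ ω, gEntropy ℓ (C ω) ∂P) ∧
    (0 ≤ ∫ ω, divg ℓ (S ω) (C ω) ∂P) ∧
    ((∀ p ∈ simplex 𝒴, ∀ q ∈ simplex 𝒴, divg ℓ p q = 0 → p = q) →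
      (∫ ω, divg ℓ (S ω) (C ω) ∂P = 0 ↔ S =ᵐ[P] C)) ∧
    (S =ᵐ[P] C → ∀ y, ∫ ω, S ω y ∂P = (P {ω | Y ω = y}).toReal) := by
  obtain ⟨M, hM⟩ := hℓbdd
  have hm := hSmeas.comap_le
  have hC : IsCondLaw _ P Y C := hCver
  have hℓS : ∀ y, AEStronglyMeasurable[MeasurableSpace.comap S inferInstance]
      (fun ω => ℓ (S ω) y) P := fun y =>
    ((hℓmeas y).comp (comap_measurable S)).aestronglyMeasurable
  have hℓC : ∀ y, AEStronglyMeasurable (fun ω => ℓ (C ω) y) P := fun y =>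
    ((hℓmeas y).comp_aemeasurable (hC.aemeasurable hm)).aestronglyMeasurable
  have hbound : ∀ {p : Ω → 𝒴 → ℝ}, (∀ ω, p ω ∈ simplex 𝒴) → ∀ y, ∀ᵐ ω ∂P, ‖ℓ (p ω) y‖ ≤ M :=
    fun hp y => ae_of_all _ fun ω => (Real.norm_eq_abs _).trans_le (hM _ (hp ω) y)
  have hrisk := integrable_condRisk_s9 (fun y => (hℓS y).mono hm) M (hbound hSΔ) hC.integrable
  have hent : Integrable (fun ω => gEntropy ℓ (C ω)) P :=
    integrable_condRisk_s9 hℓC M (hbound hCΔ) hC.integrable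
  have hdivg : Integrable (fun ω => divg ℓ (S ω) (C ω)) P := hrisk.sub hent
  refine ⟨?_, integral_nonneg fun ω => hproper _ (hSΔ ω) _ (hCΔ ω),
    fun hstrict => integral_divg_eq_zero_iff hproper hstrict hSΔ hCΔ hdivg, fun hSC y => ?_⟩
  · rw [← integral_add hdivg hent]
    simp only [divg, sub_add_cancel]
    exact hC.integral_apply_eq_integral_sum_mul hm hY hℓS M (hbound hSΔ)
  · rw [integral_congr_ae (hSC.mono fun ω h => congrFun h y)]
    exact hC.integral_eq_measureReal hm hY y

/-- calibration error as proper regret. Let `ℓ` be a proper loss,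
`S` a measurable `Δ(𝒴)`-valued score and `C := Q_{σ(S)}`. Then
(i) `E[ℓ(S,Y)] = E[d_ℓ(S,C)] + E[E_ℓ(C)]`; (ii) `E[d_ℓ(S,C)] ≥ 0`;
(iii) if `ℓ` is strictly proper, `E[d_ℓ(S,C)] = 0` iff `S = C` a.s.;
(iv) if `S = C` a.s. (perfect calibration) then `E[S(y)] = P(Y = y)` for all `y`
(global balance). -/
theorem calibration_error_as_proper_regret
    {Ω 𝒴 : Type*} [Fintype 𝒴] [Nonempty 𝒴]
    [MeasurableSpace 𝒴] [MeasurableSingletonClass 𝒴]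
    {mΩ : MeasurableSpace Ω} {P : Measure Ω} [IsProbabilityMeasure P]
    (Y : Ω → 𝒴) (hY : Measurable Y)
    (ℓ : (𝒴 → ℝ) → 𝒴 → ℝ)
    (hℓmeas : ∀ y, Measurable fun p : 𝒴 → ℝ => ℓ p y)
    (hℓbdd : ∃ M : ℝ, ∀ p ∈ simplex 𝒴, ∀ y, |ℓ p y| ≤ M)
    (hproper : ∀ p ∈ simplex 𝒴, ∀ q ∈ simplex 𝒴, 0 ≤ divg ℓ p q)
    (S : Ω → 𝒴 → ℝ) (hSΔ : ∀ ω, S ω ∈ simplex 𝒴) (hSmeas : Measurable S)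
    (C : Ω → 𝒴 → ℝ) (hCΔ : ∀ ω, C ω ∈ simplex 𝒴)
    (hCmeas : ∀ y, Measurable[MeasurableSpace.comap S inferInstance] fun ω => C ω y)
    (hCver : ∀ y, (fun ω => C ω y)
      =ᵐ[P] P[Set.indicator {ω | Y ω = y} (fun _ => (1 : ℝ))
              | MeasurableSpace.comap S inferInstance]) :
    (∫ ω, ℓ (S ω) (Y ω) ∂P
        = ∫ ω, divg ℓ (S ω) (C ω) ∂P + ∫ ω, gEntropy ℓ (C ω) ∂P) ∧
    (0 ≤ ∫ ω, divg ℓ (S ω) (C ω) ∂P) ∧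
    ((∀ p ∈ simplex 𝒴, ∀ q ∈ simplex 𝒴, divg ℓ p q = 0 → p = q) →
      (∫ ω, divg ℓ (S ω) (C ω) ∂P = 0 ↔ S =ᵐ[P] C)) ∧
    (S =ᵐ[P] C → ∀ y, ∫ ω, S ω y ∂P = (P {ω | Y ω = y}).toReal) :=
  calibration_error_as_proper_regret_general (mΩ := mΩ) Y hY ℓ hℓmeas hℓbdd hproper S hSΔ hSmeas C
    hCΔ hCver
end
end

section
/- Let ℓ be a proper loss, let S : Ω → Δ(𝒴) be a measurable random variable, and set C := Q_{σ(S)}. Then (i) for every measurable map g : Δ(𝒴) → Δ(𝒴), E[ℓ(g(S), Y)] − E[ℓ(C, Y)] = E[d_ℓ(g(S), C)] ≥ 0; and (ii) the infimum over all measurable g : Δ(𝒴) → Δ(𝒴) of E[ℓ(g(S), Y)] equals E[ℓ(C, Y)] = E[E_ℓ(C)]. -/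
open MeasureTheory Finset

noncomputable section

/-- population-optimal recalibration. Let `ℓ` be a proper loss,
`S` a measurable `Δ(𝒴)`-valued score, `C := Q_{σ(S)}`, with a measurable version
`C = c(S)`. Then (i) for every measurable `g : Δ(𝒴) → Δ(𝒴)`,
`E[ℓ(g(S),Y)] − E[ℓ(C,Y)] = E[d_ℓ(g(S),C)] ≥ 0`; and (ii) the infimum over all
measurable `g` of `E[ℓ(g(S),Y)]` equals `E[ℓ(C,Y)] = E[E_ℓ(C)]`. -/
theorem population_optimal_recalibration
    {Ω 𝒴 : Type*} [Fintype 𝒴] [Nonempty 𝒴]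
    [MeasurableSpace 𝒴] [MeasurableSingletonClass 𝒴]
    {mΩ : MeasurableSpace Ω} {P : Measure Ω} [IsProbabilityMeasure P]
    (Y : Ω → 𝒴) (hY : Measurable Y)
    (ℓ : (𝒴 → ℝ) → 𝒴 → ℝ)
    (hℓmeas : ∀ y, Measurable fun p : 𝒴 → ℝ => ℓ p y)
    (hℓbdd : ∃ M : ℝ, ∀ p ∈ simplex 𝒴, ∀ y, |ℓ p y| ≤ M)
    (hproper : ∀ p ∈ simplex 𝒴, ∀ q ∈ simplex 𝒴, 0 ≤ divg ℓ p q)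
    (S : Ω → 𝒴 → ℝ) (hSΔ : ∀ ω, S ω ∈ simplex 𝒴) (hSmeas : Measurable S)
    (C : Ω → 𝒴 → ℝ) (hCΔ : ∀ ω, C ω ∈ simplex 𝒴)
    (hCver : ∀ y, (fun ω => C ω y)
      =ᵐ[P] P[Set.indicator {ω | Y ω = y} (fun _ => (1 : ℝ))
              | MeasurableSpace.comap S inferInstance])
    (c : (𝒴 → ℝ) → 𝒴 → ℝ) (hcmeas : Measurable c)
    (hcΔ : ∀ p ∈ simplex 𝒴, c p ∈ simplex 𝒴)
    (hcS : ∀ ω, C ω = c (S ω)) :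
    (∀ g : (𝒴 → ℝ) → 𝒴 → ℝ, Measurable g → (∀ p ∈ simplex 𝒴, g p ∈ simplex 𝒴) →
      (∫ ω, ℓ (g (S ω)) (Y ω) ∂P - ∫ ω, ℓ (C ω) (Y ω) ∂P
          = ∫ ω, divg ℓ (g (S ω)) (C ω) ∂P) ∧
        0 ≤ ∫ ω, divg ℓ (g (S ω)) (C ω) ∂P) ∧
    sInf {r : ℝ | ∃ g : (𝒴 → ℝ) → 𝒴 → ℝ, Measurable g ∧
        (∀ p ∈ simplex 𝒴, g p ∈ simplex 𝒴) ∧ r = ∫ ω, ℓ (g (S ω)) (Y ω) ∂P}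
      = ∫ ω, ℓ (C ω) (Y ω) ∂P ∧
    ∫ ω, ℓ (C ω) (Y ω) ∂P = ∫ ω, gEntropy ℓ (C ω) ∂P := by

  classical
  obtain ⟨M, hM⟩ := hℓbdd
  have hΩ : Nonempty Ω := by
    by_contra h
    rw [not_nonempty_iff] at h
    have := measure_univ (μ := P)
    simp [Set.univ_eq_empty_iff.mpr h] at this
  have hM0 : 0 ≤ M :=
    (abs_nonneg _).trans (hM _ (hSΔ hΩ.some) (Classical.arbitrary 𝒴))
  have hm : MeasurableSpace.comap S inferInstance ≤ mΩ := hSmeas.comap_le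
  have hSm : Measurable[MeasurableSpace.comap S inferInstance] S := fun s hs => ⟨s, hs, rfl⟩
  -- integrability helper
  have intOf : ∀ (K : ℝ) (f : Ω → ℝ), Measurable f → (∀ ω, |f ω| ≤ K) → Integrable f P := by
    intro K f hf hb
    exact ⟨hf.aestronglyMeasurable,
      HasFiniteIntegral.of_bounded (C := K) (Filter.Eventually.of_forall fun ω => by
        simpa [Real.norm_eq_abs] using hb ω)⟩
  -- C coordinates in [0,1]
  have hC01 : ∀ ω y, 0 ≤ C ω y ∧ C ω y ≤ 1 := by
    intro ω y
    obtain ⟨h1, h2⟩ := hCΔ ω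
    refine ⟨h1 y, ?_⟩
    rw [← h2]
    exact Finset.single_le_sum (fun i _ => h1 i) (Finset.mem_univ y)
  -- key exchange lemma
  have key : ∀ (y : 𝒴) (h : (𝒴 → ℝ) → ℝ), Measurable h → (∀ ω, |h (S ω)| ≤ M) →
      ∫ ω, Set.indicator {ω | Y ω = y} (fun _ => (1:ℝ)) ω * h (S ω) ∂P
        = ∫ ω, C ω y * h (S ω) ∂P := by
    intro y h hh hb
    have hsetm : MeasurableSet {ω | Y ω = y} := hY (measurableSet_singleton y)
    have hind : Integrable (Set.indicator {ω | Y ω = y} (fun _ => (1:ℝ))) P :=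
      (integrable_const (1:ℝ)).indicator hsetm
    have hhSm : StronglyMeasurable[MeasurableSpace.comap S inferInstance]
        (fun ω => h (S ω)) := (hh.comp hSm).stronglyMeasurable
    have hpull := condExp_stronglyMeasurable_mul_of_bound hm hhSm hind M
      (Filter.Eventually.of_forall fun ω => by simpa [Real.norm_eq_abs] using hb ω)
    have h1 : ∫ ω, Set.indicator {ω | Y ω = y} (fun _ => (1:ℝ)) ω * h (S ω) ∂P
        = ∫ ω, (fun ω => h (S ω)) ω
            * (P[Set.indicator {ω | Y ω = y} (fun _ => (1:ℝ))|MeasurableSpace.comap S inferInstance]) ω ∂P := by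
      rw [show (fun ω => Set.indicator {ω | Y ω = y} (fun _ => (1:ℝ)) ω * h (S ω))
          = fun ω => ((fun ω => h (S ω)) * Set.indicator {ω | Y ω = y} (fun _ => (1:ℝ))) ω
          from funext fun ω => mul_comm _ _]
      rw [← integral_condExp hm (f := (fun ω => h (S ω)) * Set.indicator {ω | Y ω = y} (fun _ => (1:ℝ)))]
      exact integral_congr_ae hpull
    rw [h1]
    refine integral_congr_ae ?_
    filter_upwards [hCver y] with ω hω
    rw [hω]
    exact mul_comm _ _
  -- conditional risk bound
  have hCRbd : ∀ ω, ∀ p ∈ simplex 𝒴, |condRisk ℓ p (C ω)| ≤ M := by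
    intro ω p hp
    have h1 : |condRisk ℓ p (C ω)| ≤ ∑ y, |C ω y * ℓ p y| :=
      Finset.abs_sum_le_sum_abs _ _
    have h2 : ∀ y, |C ω y * ℓ p y| ≤ C ω y * M := by
      intro y
      rw [abs_mul, abs_of_nonneg (hC01 ω y).1]
      exact mul_le_mul_of_nonneg_left (hM p hp y) (hC01 ω y).1
    calc |condRisk ℓ p (C ω)| ≤ ∑ y, |C ω y * ℓ p y| := h1
      _ ≤ ∑ y, C ω y * M := Finset.sum_le_sum fun y _ => h2 y
      _ = (∑ y, C ω y) * M := by rw [Finset.sum_mul]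
      _ = M := by rw [(hCΔ ω).2, one_mul]
  -- Step A: E[ℓ(g(S),Y)] = E[L(g(S),C)]
  have stepA : ∀ g : (𝒴 → ℝ) → 𝒴 → ℝ, Measurable g → (∀ p ∈ simplex 𝒴, g p ∈ simplex 𝒴) →
      ∫ ω, ℓ (g (S ω)) (Y ω) ∂P = ∫ ω, condRisk ℓ (g (S ω)) (C ω) ∂P := by
    intro g hg hgΔ
    have hgS : ∀ ω, g (S ω) ∈ simplex 𝒴 := fun ω => hgΔ _ (hSΔ ω)
    have hmeasℓ : ∀ y, Measurable fun ω => ℓ (g (S ω)) y :=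
      fun y => (hℓmeas y).comp (hg.comp hSmeas)
    have hint1 : ∀ y : 𝒴, Integrable
        (fun ω => Set.indicator {ω | Y ω = y} (fun _ => (1:ℝ)) ω * ℓ (g (S ω)) y) P := by
      intro y
      refine intOf M _ (((measurable_const).indicator (hY (measurableSet_singleton y))).mul
        (hmeasℓ y)) fun ω => ?_
      rw [abs_mul]
      calc |Set.indicator {ω | Y ω = y} (fun _ => (1:ℝ)) ω| * |ℓ (g (S ω)) y|
          ≤ 1 * M := by
            refine mul_le_mul ?_ (hM _ (hgS ω) y) (abs_nonneg _) zero_le_one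
            by_cases hω : ω ∈ {ω | Y ω = y} <;> simp [Set.indicator_apply, hω]
        _ = M := one_mul M
    have hint2 : ∀ y : 𝒴, Integrable (fun ω => C ω y * ℓ (g (S ω)) y) P := by
      intro y
      refine intOf M _ ?_ fun ω => ?_
      · simp only [hcS]
        exact ((measurable_pi_apply y).comp (hcmeas.comp hSmeas)).mul (hmeasℓ y)
      · rw [abs_mul, abs_of_nonneg (hC01 ω y).1]
        calc C ω y * |ℓ (g (S ω)) y| ≤ 1 * M :=
            mul_le_mul (hC01 ω y).2 (hM _ (hgS ω) y) (abs_nonneg _) zero_le_one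
          _ = M := one_mul M
    calc ∫ ω, ℓ (g (S ω)) (Y ω) ∂P
        = ∫ ω, ∑ y, Set.indicator {ω | Y ω = y} (fun _ => (1:ℝ)) ω * ℓ (g (S ω)) y ∂P := by
          refine integral_congr_ae (Filter.Eventually.of_forall fun ω => ?_)
          simp [Set.indicator_apply, Set.mem_setOf_eq, ite_mul, one_mul, zero_mul,
            Finset.sum_ite_eq]
      _ = ∑ y, ∫ ω, Set.indicator {ω | Y ω = y} (fun _ => (1:ℝ)) ω * ℓ (g (S ω)) y ∂P :=
          integral_finset_sum _ fun y _ => hint1 y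
      _ = ∑ y, ∫ ω, C ω y * ℓ (g (S ω)) y ∂P := by
          refine Finset.sum_congr rfl fun y _ => ?_
          exact key y (fun p => ℓ (g p) y) ((hℓmeas y).comp hg) fun ω => hM _ (hgS ω) y
      _ = ∫ ω, ∑ y, C ω y * ℓ (g (S ω)) y ∂P :=
          (integral_finset_sum _ fun y _ => hint2 y).symm
      _ = ∫ ω, condRisk ℓ (g (S ω)) (C ω) ∂P := rfl
  -- E[ℓ(C,Y)] = E[entropy]
  have hEnt : ∫ ω, ℓ (C ω) (Y ω) ∂P = ∫ ω, gEntropy ℓ (C ω) ∂P := by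
    have h1 : ∫ ω, ℓ (C ω) (Y ω) ∂P = ∫ ω, ℓ (c (S ω)) (Y ω) ∂P := by
      simp only [hcS]
    rw [h1, stepA c hcmeas hcΔ]
    refine integral_congr_ae (Filter.Eventually.of_forall fun ω => ?_)
    show condRisk ℓ (c (S ω)) (C ω) = gEntropy ℓ (C ω)
    rw [← hcS ω, gEntropy]
  -- integrability of condRisk and gEntropy compositions
  have hintCR : ∀ g : (𝒴 → ℝ) → 𝒴 → ℝ, Measurable g → (∀ p ∈ simplex 𝒴, g p ∈ simplex 𝒴) →
      Integrable (fun ω => condRisk ℓ (g (S ω)) (C ω)) P := by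
    intro g hg hgΔ
    refine intOf M _ ?_ fun ω => hCRbd ω _ (hgΔ _ (hSΔ ω))
    simp only [hcS, condRisk]
    exact Finset.measurable_sum _ fun y _ =>
      ((measurable_pi_apply y).comp (hcmeas.comp hSmeas)).mul
        ((hℓmeas y).comp (hg.comp hSmeas))
  have hintEnt : Integrable (fun ω => gEntropy ℓ (C ω)) P := by
    have := hintCR c hcmeas hcΔ
    refine this.congr (Filter.Eventually.of_forall fun ω => ?_)
    show condRisk ℓ (c (S ω)) (C ω) = gEntropy ℓ (C ω)
    rw [← hcS ω, gEntropy]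
  -- part (i)
  have parti : ∀ g : (𝒴 → ℝ) → 𝒴 → ℝ, Measurable g → (∀ p ∈ simplex 𝒴, g p ∈ simplex 𝒴) →
      (∫ ω, ℓ (g (S ω)) (Y ω) ∂P - ∫ ω, ℓ (C ω) (Y ω) ∂P
          = ∫ ω, divg ℓ (g (S ω)) (C ω) ∂P) ∧
        0 ≤ ∫ ω, divg ℓ (g (S ω)) (C ω) ∂P := by
    intro g hg hgΔ
    constructor
    · rw [stepA g hg hgΔ, hEnt]
      rw [show (fun ω => divg ℓ (g (S ω)) (C ω))
          = fun ω => condRisk ℓ (g (S ω)) (C ω) - gEntropy ℓ (C ω) from rfl]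
      rw [integral_sub (hintCR g hg hgΔ) hintEnt]
    · exact integral_nonneg fun ω => hproper _ (hgΔ _ (hSΔ ω)) _ (hCΔ ω)
  refine ⟨parti, ?_, hEnt⟩
  -- part (ii)
  have hmem : ∫ ω, ℓ (C ω) (Y ω) ∂P ∈ {r : ℝ | ∃ g : (𝒴 → ℝ) → 𝒴 → ℝ, Measurable g ∧
      (∀ p ∈ simplex 𝒴, g p ∈ simplex 𝒴) ∧ r = ∫ ω, ℓ (g (S ω)) (Y ω) ∂P} :=
    ⟨c, hcmeas, hcΔ, by simp only [hcS]⟩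
  have hlb : ∀ r ∈ {r : ℝ | ∃ g : (𝒴 → ℝ) → 𝒴 → ℝ, Measurable g ∧
      (∀ p ∈ simplex 𝒴, g p ∈ simplex 𝒴) ∧ r = ∫ ω, ℓ (g (S ω)) (Y ω) ∂P},
      ∫ ω, ℓ (C ω) (Y ω) ∂P ≤ r := by
    rintro r ⟨g, hg, hgΔ, rfl⟩
    obtain ⟨heq, hge⟩ := parti g hg hgΔ
    linarith
  exact le_antisymm (csInf_le ⟨_, hlb⟩ hmem) (le_csInf ⟨_, hmem⟩ hlb)
end
end

section
/- There exist a probability space (Ω, F, P), a random variable Y : Ω → {0,1}, and random variables S¹, S² : Ω → [0,1] such that E[Y | σ(S¹)] = S¹ almost surely and E[Y | σ(S²)] = S² almost surely, yet the average S̄ := (S¹ + S²)/2 is not calibrated: P(E[Y | σ(S̄)] ≠ S̄) > 0. A witness: S¹, S² each take values in {0.25, 0.75}, the pair (S¹,S²) is uniform on the four combinations, and conditionally on (S¹,S²), Y is Bernoulli with parameter m(0.25,0.25)=0, m(0.25,0.75)=m(0.75,0.25)=0.5, m(0.75,0.75)=1; then P(S̄ = 0.25) = 1/4 while E[Y | S̄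 = 0.25] = 0. -/
/-!
Let two independent fair coins `a, b` carry the scores `S¹ = score a`, `S² = score b` with
`score 0 = 1/4`, `score 1 = 3/4`, and let `Y = a` when the coins agree and `Y = c`, a third
independent fair coin, when they disagree. Given `a = 1`, `Y = 1` with probability `3/4`, and given
`a = 0` with probability `1/4`, so `S¹` (and likewise `S²`) is calibrated. But the average is `1/4`
exactly when both coins show `0`, and then `Y = 0`: the average is not calibrated on that event of
probability `1/4`.
-/

open MeasureTheory ProbabilityTheory Function

section Calibration

variable {Ω : Type*} [MeasurableSpace Ω] {P : Measure Ω} {Y S : Ω → ℝ}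

theorem MeasureTheory.Integrable.of_finite_range [IsFiniteMeasure P] (hS : Measurable S)
    (hS_fin : (Set.range S).Finite) : Integrable S P := by
  obtain ⟨C, hC⟩ := (hS_fin.image (‖·‖)).bddAbove
  exact .of_bound hS.aestronglyMeasurable C
    (.of_forall fun ω => hC ⟨S ω, Set.mem_range_self ω, rfl⟩)

theorem setIntegral_preimage_singleton_self (hS : Measurable S) (v : ℝ) :
    ∫ ω in S ⁻¹' {v}, S ω ∂P = v * P.real (S ⁻¹' {v}) := by
  rw [setIntegral_congr_fun (hS (measurableSet_singleton v)) fun ω hω => hω,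
    setIntegral_const, smul_eq_mul, mul_comm]

theorem condExp_comap_ae_eq_self_iff [IsFiniteMeasure P] (hY : Integrable Y P)
    (hS : Measurable S) (hS_fin : (Set.range S).Finite) :
    P[Y | MeasurableSpace.comap S inferInstance] =ᵐ[P] S ↔
      ∀ v ∈ Set.range S, ∫ ω in S ⁻¹' {v}, Y ω ∂P = v * P.real (S ⁻¹' {v}) := by
  have hm := hS.comap_le
  have hS_meas : Measurable[MeasurableSpace.comap S inferInstance] S := comap_measurable S
  constructor
  · intro h v _
    calc ∫ ω in S ⁻¹' {v}, Y ω ∂P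
        = ∫ ω in S ⁻¹' {v}, (P[Y | MeasurableSpace.comap S inferInstance]) ω ∂P :=
          (setIntegral_condExp hm hY (hS_meas (measurableSet_singleton v))).symm
      _ = ∫ ω in S ⁻¹' {v}, S ω ∂P := integral_congr_ae (ae_restrict_of_ae h)
      _ = v * P.real (S ⁻¹' {v}) := setIntegral_preimage_singleton_self hS v
  · intro h
    have hS_int : Integrable S P := .of_finite_range hS hS_fin
    refine (ae_eq_condExp_of_forall_setIntegral_eq hm hY (fun _ _ _ => hS_int.integrableOn)
      ?_ hS_meas.aestronglyMeasurable).symm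
    rintro _ ⟨A, -, rfl⟩ -
    classical
    set levels := hS_fin.toFinset.filter (· ∈ A)
    have hA : S ⁻¹' A = ⋃ v ∈ levels, S ⁻¹' {v} := by
      ext ω; simp [levels]
    have hmeas : ∀ v ∈ levels, MeasurableSet (S ⁻¹' {v}) :=
      fun v _ => hS (measurableSet_singleton v)
    have hdisj : Set.Pairwise ↑levels (Disjoint on fun v => S ⁻¹' {v}) :=
      fun v _ w _ hvw => (Set.disjoint_singleton.2 hvw).preimage S
    rw [hA, integral_biUnion_finset _ hmeas hdisj fun _ _ => hS_int.integrableOn,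
      integral_biUnion_finset _ hmeas hdisj fun _ _ => hY.integrableOn]
    refine Finset.sum_congr rfl fun v hv => ?_
    rw [setIntegral_preimage_singleton_self hS, h v (by simpa using (Finset.mem_filter.1 hv).1)]

end Calibration

theorem ProbabilityTheory.measureReal_uniformOn_univ_setOf {Ω : Type*} [Fintype Ω]
    [MeasurableSpace Ω] [MeasurableSingletonClass Ω] (p : Ω → Prop) [DecidablePred p] :
    (uniformOn Set.univ : Measure Ω).real {ω | p ω} =
      (Finset.univ.filter p).card / Fintype.card Ω := by
  rw [measureReal_def, uniformOn_univ, ← Finset.coe_filter_univ, Measure.count_apply_finset,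
    ENNReal.toReal_div]
  simp

namespace AveragingExample

abbrev Outcome : Type := Bool × Bool × Bool

noncomputable abbrev P : Measure Outcome := uniformOn Set.univ

def score (b : Bool) : ℝ := if b then 0.75 else 0.25

def label (ω : Outcome) : Bool := if ω.1 = ω.2.1 then ω.1 else ω.2.2

noncomputable def Y : Outcome → ℝ := {ω | label ω}.indicator 1

def S1 : Outcome → ℝ := score ∘ fun ω => ω.1

def S2 : Outcome → ℝ := score ∘ fun ω => ω.2.1

noncomputable def average (ω : Outcome) : ℝ := (S1 ω + S2 ω) / 2

theorem score_injective : Injective score := by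
  intro a b; cases a <;> cases b <;> norm_num [score]

theorem range_score : Set.range score = {0.25, 0.75} := by
  ext v; constructor
  · rintro ⟨b, rfl⟩; cases b <;> simp [score]
  · rintro (rfl | rfl)
    exacts [⟨false, rfl⟩, ⟨true, rfl⟩]

theorem score_eq_quarter_or_three_quarters (b : Bool) : score b = 0.25 ∨ score b = 0.75 := by
  cases b <;> simp [score]

theorem Y_eq_one_iff (ω : Outcome) : Y ω = 1 ↔ label ω := by
  by_cases h : label ω <;> simp [Y, h]

theorem Y_eq_zero_or_one (ω : Outcome) : Y ω = 0 ∨ Y ω = 1 := by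
  by_cases h : label ω <;> simp [Y, h]

theorem average_eq_quarter_iff (ω : Outcome) :
    average ω = 0.25 ↔ ω.1 = false ∧ ω.2.1 = false := by
  rcases ω with ⟨_ | _, _ | _, _⟩ <;> norm_num [average, S1, S2, score]

theorem measureReal_setOf (p : Outcome → Prop) [DecidablePred p] :
    P.real {ω | p ω} = (∑ ω, if p ω then 1 else 0) / 8 := by
  rw [measureReal_uniformOn_univ_setOf, Finset.card_filter]; push_cast; rfl

theorem measure_eq_ofReal_measureReal (s : Set Outcome) : P s = ENNReal.ofReal (P.real s) :=
  (ofReal_measureReal (measure_ne_top P s)).symm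

theorem setIntegral_Y (p : Outcome → Prop) :
    ∫ ω in {ω | p ω}, Y ω ∂P = P.real {ω | label ω ∧ p ω} := by
  rw [Y, integral_indicator_one .of_discrete, measureReal_restrict_apply .of_discrete]
  rfl

theorem condExp_Y_comap_score_comp (f : Outcome → Bool)
    (hf : ∀ x, P.real {ω | label ω ∧ f ω = x} = score x * P.real {ω | f ω = x}) :
    P[Y | MeasurableSpace.comap (score ∘ f) inferInstance] =ᵐ[P] score ∘ f := by
  rw [condExp_comap_ae_eq_self_iff .of_finite .of_discrete (Set.finite_range _)]
  rintro _ ⟨ω, rfl⟩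
  have hpre : score ∘ f ⁻¹' {score (f ω)} = {ω' | f ω' = f ω} := by
    ext; simp [score_injective.eq_iff]
  rw [comp_apply, hpre, setIntegral_Y, hf]

theorem condExp_Y_comap_S1 : P[Y | MeasurableSpace.comap S1 inferInstance] =ᵐ[P] S1 :=
  condExp_Y_comap_score_comp _ fun x => by
    cases x <;> simp only [measureReal_setOf, Fintype.sum_prod_type, Fintype.sum_bool, label] <;>
      norm_num [score]

theorem condExp_Y_comap_S2 : P[Y | MeasurableSpace.comap S2 inferInstance] =ᵐ[P] S2 :=
  condExp_Y_comap_score_comp _ fun x => by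
    cases x <;> simp only [measureReal_setOf, Fintype.sum_prod_type, Fintype.sum_bool, label] <;>
      norm_num [score]

theorem not_condExp_Y_comap_average :
    ¬ P[Y | MeasurableSpace.comap average inferInstance] =ᵐ[P] average := by
  rw [condExp_comap_ae_eq_self_iff .of_finite .of_discrete (Set.finite_range average)]
  intro h
  have hquarter := h 0.25 ⟨(false, false, false), by norm_num [average, S1, S2, score]⟩
  have hpre : average ⁻¹' {0.25} = {ω | ω.1 = false ∧ ω.2.1 = false} := by
    ext ω; exact average_eq_quarter_iff ω
  rw [hpre, setIntegral_Y] at hquarter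
  simp only [measureReal_setOf, Fintype.sum_prod_type, Fintype.sum_bool, label] at hquarter
  norm_num at hquarter

theorem joint_law (x y : Bool) :
    P {ω | S1 ω = score x ∧ S2 ω = score y} = 1 / 4 ∧
      P {ω | Y ω = 1 ∧ S1 ω = score x ∧ S2 ω = score y} =
        ENNReal.ofReal ((score x + score y - 1 / 2) / 4) := by
  simp only [S1, S2, comp_apply, score_injective.eq_iff, Y_eq_one_iff,
    measure_eq_ofReal_measureReal]
  cases x <;> cases y <;>
    simp only [measureReal_setOf, Fintype.sum_prod_type, Fintype.sum_bool, label] <;>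
    norm_num [score, ENNReal.ofReal_div_of_pos]

theorem law_at_average_eq_quarter :
    P {ω | average ω = 0.25} = 1 / 4 ∧ P {ω | Y ω = 1 ∧ average ω = 0.25} = 0 := by
  simp only [average_eq_quarter_iff, Y_eq_one_iff, measure_eq_ofReal_measureReal,
    measureReal_setOf, Fintype.sum_prod_type, Fintype.sum_bool, label]
  norm_num [ENNReal.ofReal_div_of_pos]

end AveragingExample

open AveragingExample

/-- two calibrated scores whose average is miscalibrated. There
exist a probability space, a binary `Y` and scores `S¹, S²` each calibrated
(`E[Y|σ(Sⁱ)] = Sⁱ` a.s.), with values in `{0.25, 0.75}`, the pair uniform on the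
four combinations and `Y | (S¹,S²) = (a,b)` Bernoulli with parameter
`m(a,b) = a + b − 1/2` (i.e. `m(.25,.25)=0`, `m(.25,.75)=m(.75,.25)=.5`,
`m(.75,.75)=1`), such that `P(S̄ = 0.25) = 1/4` while `E[Y | S̄ = 0.25] = 0`, and the
average `S̄ := (S¹+S²)/2` is not calibrated: `P(E[Y|σ(S̄)] ≠ S̄) > 0`. -/
theorem averaging_breaks_calibration :
    ∃ (Ω : Type) (_ : MeasurableSpace Ω) (P : Measure Ω),
      IsProbabilityMeasure P ∧
      ∃ Y S1 S2 : Ω → ℝ,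
        Measurable Y ∧ (∀ ω, Y ω = 0 ∨ Y ω = 1) ∧
        Measurable S1 ∧ Measurable S2 ∧
        (∀ ω, S1 ω = 0.25 ∨ S1 ω = 0.75) ∧
        (∀ ω, S2 ω = 0.25 ∨ S2 ω = 0.75) ∧
        (∀ a ∈ ({0.25, 0.75} : Set ℝ), ∀ b ∈ ({0.25, 0.75} : Set ℝ),
          P {ω | S1 ω = a ∧ S2 ω = b} = 1 / 4 ∧
          P {ω | Y ω = 1 ∧ S1 ω = a ∧ S2 ω = b}
            = ENNReal.ofReal ((a + b - 1 / 2) / 4)) ∧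
        (P[Y | MeasurableSpace.comap S1 inferInstance] =ᵐ[P] S1) ∧
        (P[Y | MeasurableSpace.comap S2 inferInstance] =ᵐ[P] S2) ∧
        P {ω | (S1 ω + S2 ω) / 2 = 0.25} = 1 / 4 ∧
        P {ω | Y ω = 1 ∧ (S1 ω + S2 ω) / 2 = 0.25} = 0 ∧
        0 < P {ω | (P[Y | MeasurableSpace.comap (fun ω' => (S1 ω' + S2 ω') / 2)
                        inferInstance]) ω ≠ (S1 ω + S2 ω) / 2} := by
  refine ⟨Outcome, inferInstance, P, inferInstance, Y, S1, S2, .of_discrete, Y_eq_zero_or_one,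
    .of_discrete, .of_discrete, fun ω => score_eq_quarter_or_three_quarters ω.1,
    fun ω => score_eq_quarter_or_three_quarters ω.2.1, ?_, condExp_Y_comap_S1,
    condExp_Y_comap_S2, law_at_average_eq_quarter.1, law_at_average_eq_quarter.2,
    pos_iff_ne_zero.2 fun h => not_condExp_Y_comap_average (ae_iff.2 h)⟩
  rw [← range_score]
  rintro _ ⟨x, rfl⟩ _ ⟨y, rfl⟩
  exact joint_law x y
end

section
/- Fix ε > 0 and let Δ_ε(𝒴) denote the set of p ∈ Δ(𝒴) with p(y) ≥ ε for all y. Let F₀ ⊆ F₁ ⊆ ⋯ ⊆ F_T ⊆ F be a finite filtration, set Q_t := Q_{F_t}, and let T₀ : Ω → Δ_ε(𝒴) be an F₀-measurable random variable. With the conventions 0·log 0 = 0 and 0·log(0/0) = 0, define KL(q‖p) := ∑_{y∈𝒴} q(y) log(q(y)/p(y)) and H(q) := −∑_{y∈𝒴} q(y) log q(y). Then E[−log T₀(Y)] = E[KL(Q₀ ‖ T₀)] + ∑_{t=0}^{T−1} E[KL(Q_{t+1} ‖ Q_t)] + E[H(Q_T)], all terms being well defined and finite since almost surely Q_t(y)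 = 0 implies Q_{t+1}(y) = 0 for every y ∈ 𝒴. -/
/-!
Write `X_y = 1_{Y = y}`, so that `Q_t(y)` is a version of `E[X_y | F_t]`, and let
`L(p, q) = ∑_y q(y) (-log p(y))` be the conditional risk of the log loss.
For an `F_t`-measurable simplex-valued `p`, pulling the nonnegative factor `-log p(y)` out of the
conditional expectation gives `E[L(p, Q_t)] = E[-log p(Y)]`; as `-log p(y)` may be unbounded, this
is done with lower Lebesgue integrals, where the pull-out property needs no integrability.
Applied to `p = Q_t` at the levels `t` and `t + 1` it gives
`E[L(Q_t, Q_{t+1})] = E[-log Q_t(Y)] = E[L(Q_t, Q_t)] = E[H(Q_t)]`.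
Since `X_y` integrates to zero over the `F_t`-measurable set `{Q_t(y) = 0}`, so does `Q_{t+1}(y)`;
hence `KL(Q_{t+1} ‖ Q_t) = L(Q_t, Q_{t+1}) - H(Q_{t+1})` almost surely, and the expected
information gains telescope to `E[H(Q_0)] - E[H(Q_N)]`. Finally
`E[KL(Q_0 ‖ T_0)] = E[L(T_0, Q_0)] - E[H(Q_0)] = E[-log T_0(Y)] - E[H(Q_0)]`.
-/

open MeasureTheory Finset

noncomputable section

/-- Kullback–Leibler divergence `KL(q‖p) := ∑_y q(y) log(q(y)/p(y))`, with the
conventions `0·log 0 = 0` and `0·log(0/0) = 0` (note `Real.log 0 = 0` in Lean). -/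
def KLdiv {𝒴 : Type*} [Fintype 𝒴] (q p : 𝒴 → ℝ) : ℝ :=
  ∑ y, q y * Real.log (q y / p y)

/-- Shannon entropy `H(q) := −∑_y q(y) log q(y)`, with the convention `0·log 0 = 0`. -/
def shEntropy {𝒴 : Type*} [Fintype 𝒴] (q : 𝒴 → ℝ) : ℝ :=
  -∑ y, q y * Real.log (q y)

/-- The ε-interior `Δ_ε(𝒴)` of the simplex: distributions with all coordinates `≥ ε`. -/
def simplexEps (𝒴 : Type*) [Fintype 𝒴] (ε : ℝ) : Set (𝒴 → ℝ) :=
  {p | p ∈ simplex 𝒴 ∧ ∀ y, ε ≤ p y}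

open scoped ENNReal

section CondExp

variable {Ω : Type*} {m m0 : MeasurableSpace Ω} {μ : Measure[m0] Ω}

theorem lintegral_ofReal_mul_of_ae_eq_condExp (hm : m ≤ m0) [SigmaFinite (μ.trim hm)]
    {f q : Ω → ℝ} (hf : Integrable f μ) (hf0 : 0 ≤ᵐ[μ] f) (hq : q =ᵐ[μ] μ[f|m])
    {h : Ω → ℝ≥0∞} (hh : Measurable[m] h) :
    ∫⁻ ω, ENNReal.ofReal (q ω) * h ω ∂μ = ∫⁻ ω, ENNReal.ofReal (f ω) * h ω ∂μ := by
  -- the densities `μ[f|m]` and `f` define measures that agree on `m`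
  have hdens : (μ.withDensity fun ω => ENNReal.ofReal (μ[f|m] ω)).trim hm
      = (μ.withDensity fun ω => ENNReal.ofReal (f ω)).trim hm := by
    refine @Measure.ext _ m _ _ fun s hs => ?_
    rw [trim_measurableSet_eq hm hs, trim_measurableSet_eq hm hs, withDensity_apply _ (hm s hs),
      withDensity_apply _ (hm s hs),
      ← ofReal_integral_eq_lintegral_ofReal integrable_condExp.integrableOn
        (ae_restrict_of_ae (condExp_nonneg hf0)),
      ← ofReal_integral_eq_lintegral_ofReal hf.integrableOn (ae_restrict_of_ae hf0),
      setIntegral_condExp hm hf hs]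
  calc ∫⁻ ω, ENNReal.ofReal (q ω) * h ω ∂μ
      = ∫⁻ ω, ENNReal.ofReal (μ[f|m] ω) * h ω ∂μ :=
        lintegral_congr_ae (hq.mono fun ω hω => by simp only [hω])
    _ = ∫⁻ ω, h ω ∂(μ.withDensity fun ω => ENNReal.ofReal (μ[f|m] ω)).trim hm := by
        rw [lintegral_trim hm hh, lintegral_withDensity_eq_lintegral_mul₀
          (stronglyMeasurable_condExp.mono hm).measurable.ennreal_ofReal.aemeasurable
          (hh.mono hm le_rfl).aemeasurable]
        rfl
    _ = ∫⁻ ω, ENNReal.ofReal (f ω) * h ω ∂μ := by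
        rw [hdens, lintegral_trim hm hh, lintegral_withDensity_eq_lintegral_mul₀
          hf.aemeasurable.ennreal_ofReal (hh.mono hm le_rfl).aemeasurable]
        rfl

theorem ae_imp_eq_zero_of_ae_eq_condExp {m₁ m₂ : MeasurableSpace Ω} (hm₁₂ : m₁ ≤ m₂)
    (hm₂ : m₂ ≤ m0) [SigmaFinite (μ.trim (hm₁₂.trans hm₂))] [SigmaFinite (μ.trim hm₂)]
    {f q₁ q₂ : Ω → ℝ} (hf : Integrable f μ) (hf0 : 0 ≤ᵐ[μ] f)
    (hq₁ : q₁ =ᵐ[μ] μ[f|m₁]) (hq₁m : Measurable[m₁] q₁)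
    (hq₂ : q₂ =ᵐ[μ] μ[f|m₂]) (hq₂0 : 0 ≤ᵐ[μ] q₂) :
    ∀ᵐ ω ∂μ, q₁ ω = 0 → q₂ ω = 0 := by
  set S := {ω | q₁ ω = 0}
  have hS : MeasurableSet[m₁] S := hq₁m (measurableSet_singleton 0)
  have hind : Measurable[m₁] (S.indicator (1 : Ω → ℝ≥0∞)) :=
    Measurable.indicator (m := m₁) measurable_const hS
  have hzero : ∫⁻ ω, ENNReal.ofReal (q₂ ω) * S.indicator 1 ω ∂μ = 0 := by
    rw [lintegral_ofReal_mul_of_ae_eq_condExp hm₂ hf hf0 hq₂ (hind.mono hm₁₂ le_rfl),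
      ← lintegral_ofReal_mul_of_ae_eq_condExp (hm₁₂.trans hm₂) hf hf0 hq₁ hind]
    refine lintegral_eq_zero_of_ae_eq_zero (ae_of_all _ fun ω => ?_)
    by_cases hω : ω ∈ S
    · simp [hω, show q₁ ω = 0 from hω]
    · simp [hω]
  have hq₂m : AEMeasurable q₂ μ :=
    ((stronglyMeasurable_condExp.mono hm₂).aestronglyMeasurable.congr hq₂.symm).aemeasurable
  filter_upwards [(lintegral_eq_zero_iff' ((hq₂m.ennreal_ofReal).mul
    (hind.mono (hm₁₂.trans hm₂) le_rfl).aemeasurable)).1 hzero, hq₂0] with ω hω hnn hq₁ω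
  have : ENNReal.ofReal (q₂ ω) = 0 := by simpa [S, hq₁ω] using hω
  exact le_antisymm (ENNReal.ofReal_eq_zero.1 this) hnn

end CondExp

theorem integrable_and_integral_eq_of_lintegral_ofReal_eq {α : Type*} {mα : MeasurableSpace α}
    {μ : Measure α} {u v : α → ℝ} (hu : AEStronglyMeasurable u μ) (hu0 : 0 ≤ᵐ[μ] u)
    (hv : Integrable v μ) (hv0 : 0 ≤ᵐ[μ] v)
    (h : ∫⁻ a, ENNReal.ofReal (u a) ∂μ = ∫⁻ a, ENNReal.ofReal (v a) ∂μ) :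
    Integrable u μ ∧ ∫ a, u a ∂μ = ∫ a, v a ∂μ :=
  ⟨⟨hu, (hasFiniteIntegral_iff_ofReal hu0).2 (h ▸ (hasFiniteIntegral_iff_ofReal hv0).1 hv.2)⟩,
    by rw [integral_eq_lintegral_of_nonneg_ae hu0 hu,
      integral_eq_lintegral_of_nonneg_ae hv0 hv.1, h]⟩

section LogLoss

variable {𝒴 : Type*} [Fintype 𝒴]

def logLoss (p : 𝒴 → ℝ) (y : 𝒴) : ℝ :=
  -Real.log (p y)

theorem apply_le_one_of_mem_simplex {p : 𝒴 → ℝ} (hp : p ∈ simplex 𝒴) (y : 𝒴) : p y ≤ 1 :=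
  hp.2 ▸ Finset.single_le_sum (fun i _ => hp.1 i) (Finset.mem_univ y)

theorem logLoss_nonneg {p : 𝒴 → ℝ} (hp : p ∈ simplex 𝒴) (y : 𝒴) : 0 ≤ logLoss p y :=
  neg_nonneg.2 (Real.log_nonpos (hp.1 y) (apply_le_one_of_mem_simplex hp y))

theorem logLoss_le_neg_log {ε : ℝ} (hε : 0 < ε) {p : 𝒴 → ℝ} (hp : p ∈ simplexEps 𝒴 ε) (y : 𝒴) :
    logLoss p y ≤ -Real.log ε :=
  neg_le_neg (Real.log_le_log hε (hp.2 y))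

theorem condRisk_logLoss_nonneg {p q : 𝒴 → ℝ} (hp : p ∈ simplex 𝒴) (hq : ∀ y, 0 ≤ q y) :
    0 ≤ condRisk logLoss p q :=
  Finset.sum_nonneg fun y _ => mul_nonneg (hq y) (logLoss_nonneg hp y)

theorem condRisk_logLoss_self (q : 𝒴 → ℝ) : condRisk logLoss q q = shEntropy q := by
  simp [condRisk, logLoss, shEntropy]

theorem shEntropy_nonneg {q : 𝒴 → ℝ} (hq : q ∈ simplex 𝒴) : 0 ≤ shEntropy q :=
  condRisk_logLoss_self q ▸ condRisk_logLoss_nonneg hq hq.1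

theorem abs_shEntropy_le_card {q : 𝒴 → ℝ} (hq : q ∈ simplex 𝒴) :
    |shEntropy q| ≤ Fintype.card 𝒴 := by
  rw [shEntropy, abs_neg]
  calc |∑ y, q y * Real.log (q y)| ≤ ∑ y, |q y * Real.log (q y)| := Finset.abs_sum_le_sum_abs _ _
    _ ≤ ∑ _y : 𝒴, (1 : ℝ) := Finset.sum_le_sum fun y _ => abs_le.2
        ⟨by linarith [Real.self_sub_one_le_mul_log (hq.1 y), hq.1 y],
          (Real.mul_log_nonpos (hq.1 y) (apply_le_one_of_mem_simplex hq y)).trans zero_le_one⟩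
    _ = Fintype.card 𝒴 := by simp

theorem KLdiv_eq_condRisk_logLoss_sub_shEntropy {p q : 𝒴 → ℝ} (h : ∀ y, p y = 0 → q y = 0) :
    KLdiv q p = condRisk logLoss p q - shEntropy q := by
  rw [← condRisk_logLoss_self, KLdiv, condRisk, condRisk, ← Finset.sum_sub_distrib]
  refine Finset.sum_congr rfl fun y _ => ?_
  by_cases hq : q y = 0
  · simp [hq]
  · rw [logLoss, logLoss, Real.log_div hq (mt (h y) hq)]
    ring

variable {Ω : Type*} {m m0 : MeasurableSpace Ω} {μ : Measure[m0] Ω}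

theorem measurable_condRisk_logLoss {p q : Ω → 𝒴 → ℝ} (hp : ∀ y, Measurable fun ω => p ω y)
    (hq : ∀ y, Measurable fun ω => q ω y) :
    Measurable fun ω => condRisk logLoss (p ω) (q ω) :=
  Finset.measurable_sum _ fun y _ => (hq y).mul (Real.measurable_log.comp (hp y)).neg

theorem measurable_logLoss_comp [MeasurableSpace 𝒴] [MeasurableSingletonClass 𝒴]
    {p : Ω → 𝒴 → ℝ} (hp : ∀ y, Measurable fun ω => p ω y) {Y : Ω → 𝒴} (hY : Measurable Y) :
    Measurable fun ω => logLoss (p ω) (Y ω) :=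
  (Real.measurable_log.comp ((measurable_from_prod_countable_left
    (f := fun z : Ω × 𝒴 => p z.1 z.2) hp).comp (measurable_id.prodMk hY))).neg

theorem integrable_logLoss_comp [MeasurableSpace 𝒴] [MeasurableSingletonClass 𝒴]
    [IsFiniteMeasure μ] {ε : ℝ} (hε : 0 < ε) {p : Ω → 𝒴 → ℝ} (hp : ∀ ω, p ω ∈ simplexEps 𝒴 ε)
    (hpm : ∀ y, Measurable fun ω => p ω y) {Y : Ω → 𝒴} (hY : Measurable Y) :
    Integrable (fun ω => logLoss (p ω) (Y ω)) μ :=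
  .of_bound (measurable_logLoss_comp hpm hY).aestronglyMeasurable (-Real.log ε)
    (ae_of_all _ fun ω => (abs_of_nonneg (logLoss_nonneg (hp ω).1 (Y ω))).trans_le
      (logLoss_le_neg_log hε (hp ω) (Y ω)))

theorem integral_KLdiv_eq_sub {p q : Ω → 𝒴 → ℝ}
    (hpq : ∀ᵐ ω ∂μ, ∀ y, p ω y = 0 → q ω y = 0)
    (hpq_int : Integrable (fun ω => condRisk logLoss (p ω) (q ω)) μ)
    (hq_int : Integrable (fun ω => shEntropy (q ω)) μ) :
    ∫ ω, KLdiv (q ω) (p ω) ∂μ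
      = ∫ ω, condRisk logLoss (p ω) (q ω) ∂μ - ∫ ω, shEntropy (q ω) ∂μ := by
  rw [← integral_sub hpq_int hq_int]
  exact integral_congr_ae (hpq.mono fun ω h => KLdiv_eq_condRisk_logLoss_sub_shEntropy h)

end LogLoss

section CondLaw

variable {Ω 𝒴 : Type*} [Fintype 𝒴] {m m0 : MeasurableSpace Ω}

structure IsCondLaw_s15 (μ : Measure[m0] Ω) (Y : Ω → 𝒴) (m : MeasurableSpace Ω)
    (q : Ω → 𝒴 → ℝ) : Prop where
  mem_simplex : ∀ ω, q ω ∈ simplex 𝒴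
  measurable : ∀ y, Measurable[m] fun ω => q ω y
  ae_eq_condExp : ∀ y, (fun ω => q ω y) =ᵐ[μ] μ[{ω | Y ω = y}.indicator (fun _ => 1) | m]

variable {μ : Measure[m0] Ω} [IsFiniteMeasure μ] {Y : Ω → 𝒴} {q : Ω → 𝒴 → ℝ}

namespace IsCondLaw_s15

theorem integrable_shEntropy (hq : IsCondLaw_s15 μ Y m q) (hm : m ≤ m0) :
    Integrable (fun ω => shEntropy (q ω)) μ := by
  have hqm : ∀ y, Measurable fun ω => q ω y := fun y => (hq.measurable y).mono hm le_rfl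
  refine .of_bound ?_ _ (ae_of_all _ fun ω => abs_shEntropy_le_card (hq.mem_simplex ω))
  simpa only [condRisk_logLoss_self] using
    (measurable_condRisk_logLoss hqm hqm).aestronglyMeasurable

variable [MeasurableSpace 𝒴] [MeasurableSingletonClass 𝒴]

theorem ae_imp_eq_zero_of_le {m' : MeasurableSpace Ω} {q' : Ω → 𝒴 → ℝ}
    (hq : IsCondLaw_s15 μ Y m q) (hq' : IsCondLaw_s15 μ Y m' q') (hmm' : m ≤ m') (hm' : m' ≤ m0)
    (hY : Measurable[m0] Y) :
    ∀ᵐ ω ∂μ, ∀ y, q ω y = 0 → q' ω y = 0 :=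
  ae_all_iff.2 fun y => ae_imp_eq_zero_of_ae_eq_condExp hmm' hm'
    ((integrable_const 1).indicator (hY (measurableSet_singleton y)))
    (ae_of_all _ (Set.indicator_nonneg fun _ _ => zero_le_one)) (hq.ae_eq_condExp y)
    (hq.measurable y) (hq'.ae_eq_condExp y) (ae_of_all _ fun ω => (hq'.mem_simplex ω).1 y)

theorem lintegral_ofReal_condRisk_logLoss (hq : IsCondLaw_s15 μ Y m q) (hm : m ≤ m0)
    (hY : Measurable Y) {p : Ω → 𝒴 → ℝ} (hp : ∀ ω, p ω ∈ simplex 𝒴)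
    (hpm : ∀ y, Measurable[m] fun ω => p ω y) :
    ∫⁻ ω, ENNReal.ofReal (condRisk logLoss (p ω) (q ω)) ∂μ
      = ∫⁻ ω, ENNReal.ofReal (logLoss (p ω) (Y ω)) ∂μ := by
  set X : 𝒴 → Ω → ℝ := fun y => {ω | Y ω = y}.indicator fun _ => 1
  have hq0 : ∀ ω y, 0 ≤ q ω y := fun ω => (hq.mem_simplex ω).1
  have hloss : ∀ y, Measurable[m] fun ω => ENNReal.ofReal (logLoss (p ω) y) :=
    fun y => (Real.measurable_log.comp (hpm y)).neg.ennreal_ofReal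
  have hXm : ∀ y, Measurable (X y) :=
    fun y => measurable_const.indicator (hY (measurableSet_singleton y))
  calc ∫⁻ ω, ENNReal.ofReal (condRisk logLoss (p ω) (q ω)) ∂μ
      = ∫⁻ ω, ∑ y, ENNReal.ofReal (q ω y) * ENNReal.ofReal (logLoss (p ω) y) ∂μ := by
        refine lintegral_congr fun ω => ?_
        rw [condRisk, ENNReal.ofReal_sum_of_nonneg fun y _ =>
          mul_nonneg (hq0 ω y) (logLoss_nonneg (hp ω) y)]
        simp_rw [ENNReal.ofReal_mul (hq0 ω _)]
    _ = ∑ y, ∫⁻ ω, ENNReal.ofReal (X y ω) * ENNReal.ofReal (logLoss (p ω) y) ∂μ := by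
        rw [lintegral_finsetSum' (f := fun y ω =>
            ENNReal.ofReal (q ω y) * ENNReal.ofReal (logLoss (p ω) y)) _ fun y _ =>
          ((hq.measurable y).mono hm le_rfl).ennreal_ofReal.aemeasurable.mul
            ((hloss y).mono hm le_rfl).aemeasurable]
        exact Finset.sum_congr rfl fun y _ => lintegral_ofReal_mul_of_ae_eq_condExp hm
          ((integrable_const 1).indicator (hY (measurableSet_singleton y)))
          (ae_of_all _ (Set.indicator_nonneg fun _ _ => zero_le_one)) (hq.ae_eq_condExp y)
          (hloss y)
    _ = ∫⁻ ω, ENNReal.ofReal (logLoss (p ω) (Y ω)) ∂μ := by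
        rw [← lintegral_finsetSum' (f := fun y ω =>
            ENNReal.ofReal (X y ω) * ENNReal.ofReal (logLoss (p ω) y)) _ fun y _ =>
          (hXm y).ennreal_ofReal.aemeasurable.mul ((hloss y).mono hm le_rfl).aemeasurable]
        refine lintegral_congr fun ω => ?_
        rw [Fintype.sum_eq_single (Y ω) fun y hy => by simp [X, Ne.symm hy]]
        simp [X]

theorem integral_condRisk_logLoss (hq : IsCondLaw_s15 μ Y m q) (hm : m ≤ m0) (hY : Measurable Y)
    {p : Ω → 𝒴 → ℝ} (hp : ∀ ω, p ω ∈ simplex 𝒴) (hpm : ∀ y, Measurable[m] fun ω => p ω y)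
    (hp_int : Integrable (fun ω => logLoss (p ω) (Y ω)) μ) :
    Integrable (fun ω => condRisk logLoss (p ω) (q ω)) μ ∧
      ∫ ω, condRisk logLoss (p ω) (q ω) ∂μ = ∫ ω, logLoss (p ω) (Y ω) ∂μ :=
  integrable_and_integral_eq_of_lintegral_ofReal_eq
    (measurable_condRisk_logLoss (fun y => (hpm y).mono hm le_rfl)
      fun y => (hq.measurable y).mono hm le_rfl).aestronglyMeasurable
    (ae_of_all _ fun ω => condRisk_logLoss_nonneg (hp ω) (hq.mem_simplex ω).1)
    hp_int (ae_of_all _ fun ω => logLoss_nonneg (hp ω) (Y ω))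
    (hq.lintegral_ofReal_condRisk_logLoss hm hY hp hpm)

theorem integral_logLoss (hq : IsCondLaw_s15 μ Y m q) (hm : m ≤ m0) (hY : Measurable Y) :
    Integrable (fun ω => logLoss (q ω) (Y ω)) μ ∧
      ∫ ω, logLoss (q ω) (Y ω) ∂μ = ∫ ω, shEntropy (q ω) ∂μ := by
  refine integrable_and_integral_eq_of_lintegral_ofReal_eq
    (measurable_logLoss_comp (fun y => (hq.measurable y).mono hm le_rfl) hY).aestronglyMeasurable
    (ae_of_all _ fun ω => logLoss_nonneg (hq.mem_simplex ω) (Y ω)) (hq.integrable_shEntropy hm)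
    (ae_of_all _ fun ω => shEntropy_nonneg (hq.mem_simplex ω)) ?_
  simp only [← hq.lintegral_ofReal_condRisk_logLoss hm hY hq.mem_simplex hq.measurable,
    condRisk_logLoss_self]

end IsCondLaw_s15

end CondLaw

theorem logloss_telescoping_decomposition_general
    {Ω 𝒴 : Type*} [Fintype 𝒴]
    [MeasurableSpace 𝒴] [MeasurableSingletonClass 𝒴]
    {mΩ : MeasurableSpace Ω} {P : Measure Ω} [IsProbabilityMeasure P]
    (Y : Ω → 𝒴) (hY : Measurable Y)
    {ε : ℝ} (hε : 0 < ε)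
    (N : ℕ) (F : ℕ → MeasurableSpace Ω)
    (hFmono : ∀ s t : ℕ, s ≤ t → t ≤ N → F s ≤ F t)
    (hFle : ∀ t ≤ N, F t ≤ mΩ)
    (Q : ℕ → Ω → 𝒴 → ℝ)
    (hQΔ : ∀ t ≤ N, ∀ ω, Q t ω ∈ simplex 𝒴)
    (hQmeas : ∀ t ≤ N, ∀ y, Measurable[F t] fun ω => Q t ω y)
    (hQver : ∀ t ≤ N, ∀ y, (fun ω => Q t ω y)
      =ᵐ[P] P[Set.indicator {ω | Y ω = y} (fun _ => (1 : ℝ)) | F t])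
    (T₀ : Ω → 𝒴 → ℝ) (hT₀Δ : ∀ ω, T₀ ω ∈ simplexEps 𝒴 ε)
    (hT₀meas : ∀ y, Measurable[F 0] fun ω => T₀ ω y) :
    (∀ᵐ ω ∂P, ∀ t < N, ∀ y, Q t ω y = 0 → Q (t + 1) ω y = 0) ∧
    ∫ ω, -Real.log (T₀ ω (Y ω)) ∂P
      = ∫ ω, KLdiv (Q 0 ω) (T₀ ω) ∂P
        + ∑ t ∈ Finset.range N, ∫ ω, KLdiv (Q (t + 1) ω) (Q t ω) ∂P
        + ∫ ω, shEntropy (Q N ω) ∂P := by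
  have hQ : ∀ t ≤ N, IsCondLaw_s15 P Y (F t) (Q t) :=
    fun t ht => ⟨hQΔ t ht, hQmeas t ht, hQver t ht⟩
  have habs : ∀ᵐ ω ∂P, ∀ t < N, ∀ y, Q t ω y = 0 → Q (t + 1) ω y = 0 :=
    ae_all_iff.2 fun t => Filter.eventually_imp_distrib_left.2 fun ht =>
      (hQ t ht.le).ae_imp_eq_zero_of_le (hQ (t + 1) ht) (hFmono t (t + 1) t.le_succ ht)
        (hFle (t + 1) ht) hY
  refine ⟨habs, ?_⟩
  have hQloss : ∀ t ≤ N, _ := fun t ht => (hQ t ht).integral_logLoss (hFle t ht) hY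
  have hCE₀ := (hQ 0 N.zero_le).integral_condRisk_logLoss (hFle 0 N.zero_le) hY
    (fun ω => (hT₀Δ ω).1) hT₀meas
    (integrable_logLoss_comp hε hT₀Δ (fun y => (hT₀meas y).mono (hFle 0 N.zero_le) le_rfl) hY)
  have hCE : ∀ t < N, _ := fun t ht => (hQ (t + 1) ht).integral_condRisk_logLoss
    (hFle (t + 1) ht) hY (hQΔ t ht.le)
    (fun y => (hQmeas t ht.le y).mono (hFmono t (t + 1) t.le_succ ht) le_rfl) (hQloss t ht.le).1
  have hKL : ∀ t < N, ∫ ω, KLdiv (Q (t + 1) ω) (Q t ω) ∂P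
      = ∫ ω, shEntropy (Q t ω) ∂P - ∫ ω, shEntropy (Q (t + 1) ω) ∂P := fun t ht => by
    rw [integral_KLdiv_eq_sub (habs.mono fun ω h => h t ht) (hCE t ht).1
      ((hQ (t + 1) ht).integrable_shEntropy (hFle (t + 1) ht)), (hCE t ht).2, (hQloss t ht.le).2]
  change ∫ ω, logLoss (T₀ ω) (Y ω) ∂P = _
  rw [Finset.sum_congr rfl fun t ht => hKL t (Finset.mem_range.1 ht), Finset.sum_range_sub',
    integral_KLdiv_eq_sub (ae_of_all _ fun ω y h => absurd h (hε.trans_le ((hT₀Δ ω).2 y)).ne')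
      hCE₀.1 ((hQ 0 N.zero_le).integrable_shEntropy (hFle 0 N.zero_le)), hCE₀.2]
  ring

/-- log-loss along a filtration: information gains. For a finite
filtration `F 0 ⊆ ⋯ ⊆ F N ⊆ mΩ`, `Q t := Q_{F t}` and an `F 0`-measurable predictor
`T₀` with values in `Δ_ε(𝒴)` (`ε > 0`),
`E[−log T₀(Y)] = E[KL(Q₀‖T₀)] + ∑_{t<N} E[KL(Q_{t+1}‖Q_t)] + E[H(Q_N)]`, all terms
being well defined since a.s. `Q_t(y) = 0` implies `Q_{t+1}(y) = 0` for every `y`. -/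
theorem logloss_telescoping_decomposition
    {Ω 𝒴 : Type*} [Fintype 𝒴] [Nonempty 𝒴]
    [MeasurableSpace 𝒴] [MeasurableSingletonClass 𝒴]
    {mΩ : MeasurableSpace Ω} {P : Measure Ω} [IsProbabilityMeasure P]
    (Y : Ω → 𝒴) (hY : Measurable Y)
    {ε : ℝ} (hε : 0 < ε)
    (N : ℕ) (F : ℕ → MeasurableSpace Ω)
    (hFmono : ∀ s t : ℕ, s ≤ t → t ≤ N → F s ≤ F t)
    (hFle : ∀ t ≤ N, F t ≤ mΩ)
    (Q : ℕ → Ω → 𝒴 → ℝ)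
    (hQΔ : ∀ t ≤ N, ∀ ω, Q t ω ∈ simplex 𝒴)
    (hQmeas : ∀ t ≤ N, ∀ y, Measurable[F t] fun ω => Q t ω y)
    (hQver : ∀ t ≤ N, ∀ y, (fun ω => Q t ω y)
      =ᵐ[P] P[Set.indicator {ω | Y ω = y} (fun _ => (1 : ℝ)) | F t])
    (T₀ : Ω → 𝒴 → ℝ) (hT₀Δ : ∀ ω, T₀ ω ∈ simplexEps 𝒴 ε)
    (hT₀meas : ∀ y, Measurable[F 0] fun ω => T₀ ω y) :
    (∀ᵐ ω ∂P, ∀ t < N, ∀ y, Q t ω y = 0 → Q (t + 1) ω y = 0) ∧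
    ∫ ω, -Real.log (T₀ ω (Y ω)) ∂P
      = ∫ ω, KLdiv (Q 0 ω) (T₀ ω) ∂P
        + ∑ t ∈ Finset.range N, ∫ ω, KLdiv (Q (t + 1) ω) (Q t ω) ∂P
        + ∫ ω, shEntropy (Q N ω) ∂P :=
  logloss_telescoping_decomposition_general Y hY hε N F hFmono hFle Q hQΔ hQmeas hQver T₀ hT₀Δ
    hT₀meas
end
end
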